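/- arXiv:2401.05526 — 5 statements merged into one kernel-verified Lean document; each statement's English description precedes it below -/
import Mathlib

section
/- For every function x : ℤ → [0,∞], one has ∑_{j∈ℤ} 2^j · (sup_{k≥j} x_k) ≤ 2 · ∑_{j∈ℤ} 2^j · x_j, where sup_{k≥j} x_k denotes the supremum of x_k over all integers k ≥ j and both sums are taken in the extended nonnegative reals. -/
open ENNReal

/-! Bound `⨆ k ≥ j, x k` by `∑ k ≥ j, x k` and exchange the order of summation: `x k` then
carries the weight `∑ j ≤ k, 2 ^ j = 2 * 2 ^ k`. -/

theorem ENNReal.tsum_mul_iSup_ge_le {ι : Type*} [Preorder ι] (w x : ι → ℝ≥0∞) :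
    ∑' j, w j * ⨆ (k) (_ : j ≤ k), x k ≤ ∑' k, (∑' j : Set.Iic k, w j) * x k := by
  have tail_bound (j : ι) :
      w j * ⨆ (k) (_ : j ≤ k), x k ≤ ∑' k, (Set.Iic k).indicator w j * x k := by
    rw [ENNReal.mul_iSup]
    refine iSup_le fun k => ?_
    rw [ENNReal.mul_iSup]
    refine iSup_le fun hjk => ?_
    simpa [Set.indicator_of_mem (Set.mem_Iic.mpr hjk)] using
      ENNReal.le_tsum (f := fun k => (Set.Iic k).indicator w j * x k) k
  calc ∑' j, w j * ⨆ (k) (_ : j ≤ k), x k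
      ≤ ∑' j, ∑' k, (Set.Iic k).indicator w j * x k := ENNReal.tsum_le_tsum tail_bound
    _ = ∑' k, ∑' j, (Set.Iic k).indicator w j * x k := ENNReal.tsum_comm
    _ = ∑' k, (∑' j : Set.Iic k, w j) * x k := by
      simp_rw [ENNReal.tsum_mul_right, tsum_subtype]

theorem ENNReal.tsum_zpow_Iic {a : ℝ≥0∞} (ha₀ : a ≠ 0) (ha : a ≠ ∞) (k : ℤ) :
    ∑' j : Set.Iic k, a ^ (j : ℤ) = a ^ k * (1 - a⁻¹)⁻¹ := by
  have reindex : ∑' n : ℕ, (Set.Iic k).indicator (a ^ ·) (k - n) =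
      ∑' j, (Set.Iic k).indicator (a ^ ·) j := by
    refine Function.Injective.tsum_eq (fun m n h => by simpa using h) fun j hj => ?_
    have hjk : j ∈ Set.Iic k := Set.support_indicator_subset hj
    exact ⟨(k - j).toNat, by simp only [Set.mem_Iic] at hjk ⊢; omega⟩
  have term (n : ℕ) : (Set.Iic k).indicator (a ^ ·) (k - n) = a ^ k * a⁻¹ ^ n := by
    rw [Set.indicator_of_mem (by simp), ENNReal.zpow_sub ha₀ ha, zpow_natCast, ENNReal.inv_pow]
  rw [tsum_subtype, ← reindex]
  simp_rw [term]
  rw [ENNReal.tsum_mul_left, ENNReal.tsum_geometric]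

/-- Goldman–Heinig–Stepanov type inequality: for every `x : ℤ → ℝ≥0∞`,
`∑_{j∈ℤ} 2^j · (sup_{k≥j} x_k) ≤ 2 · ∑_{j∈ℤ} 2^j · x_j`. -/
theorem stmt_0 (x : ℤ → ℝ≥0∞) :
    ∑' j : ℤ, (2 : ℝ≥0∞) ^ j * ⨆ (k : ℤ) (_ : j ≤ k), x k ≤
      2 * ∑' j : ℤ, (2 : ℝ≥0∞) ^ j * x j := by
  have weight (k : ℤ) : ∑' j : Set.Iic k, (2 : ℝ≥0∞) ^ (j : ℤ) = 2 * 2 ^ k := by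
    rw [ENNReal.tsum_zpow_Iic two_ne_zero ofNat_ne_top, ENNReal.one_sub_inv_two, inv_inv,
      mul_comm]
  calc ∑' j : ℤ, (2 : ℝ≥0∞) ^ j * ⨆ (k : ℤ) (_ : j ≤ k), x k
      ≤ ∑' k : ℤ, (∑' j : Set.Iic k, (2 : ℝ≥0∞) ^ (j : ℤ)) * x k :=
        ENNReal.tsum_mul_iSup_ge_le _ x
    _ = 2 * ∑' j : ℤ, (2 : ℝ≥0∞) ^ j * x j := by
      simp_rw [weight, mul_assoc, ENNReal.tsum_mul_left]
end

section
/- Let 1 < p < ∞. There exist constants c, C > 0, depending only on p, such that for every real sequence x = (x_n)_{n≥1}: c · (∑_{j=0}^∞ 2^{j(1−p)} (∑_{n∈Δ_j} |x_n|)^p)^{1/p} ≤ ‖x‖_{ces_p} ≤ C · (∑_{j=0}^∞ 2^{j(1−p)} (∑_{n∈Δ_j} |x_n|)^p)^{1/p}, as an inequality of values in [0,∞] (in particular one side is finite if and only if the other is). -/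
/-
Group the Cesàro terms over the dyadic blocks `Δ_j`. For `m ∈ Δ_{j+1}` the mean
`(1/m) ∑_{k ≤ m} |x_k|` is at least `2^{-(j+2)}` times the block sum `t_j = ∑_{n ∈ Δ_j} |x_n|`,
which gives the lower bound. For `m ∈ Δ_j` it is at most `2^{-j} (t_0 + ⋯ + t_j)`, so the upper
bound reduces to a discrete Hardy inequality with geometric weights `r = 2^{1-p} < 1`:
`∑_j r^j (∑_{i ≤ j} t_i)^p ≤ C ∑_i r^i t_i^p`. Hölder's inequality with weights `u^{j-i}`, `u < 1`,
bounds the left side by a Cauchy product of `∑_i r^i t_i^p` with the geometric series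
`∑_n (r u^{1-p})^n`, which converges once `u^{p-1} > r`.
-/

open ENNReal

/-- The Cesàro norm `‖x‖_{ces_p} = (∑_{n=1}^∞ ((1/n)∑_{k=1}^n |x_k|)^p)^{1/p}`
of a real sequence (indexed so that the entries of the sequence are `x 1, x 2, …`). -/
noncomputable def cesNorm (p : ℝ) (x : ℕ → ℝ) : ℝ≥0∞ :=
  (∑' n : ℕ, (((n : ℝ≥0∞) + 1)⁻¹ * ∑ k ∈ Finset.Icc 1 (n + 1), ENNReal.ofReal |x k|) ^ p) ^ (1 / p)

/-- The block form expression
`(∑_{j=0}^∞ 2^{j(1−p)} (∑_{n ∈ Δ_j} |x_n|)^p)^{1/p}`, where `Δ_j = {n : 2^j ≤ n < 2^{j+1}}`. -/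
noncomputable def cesBlock (p : ℝ) (x : ℕ → ℝ) : ℝ≥0∞ :=
  (∑' j : ℕ, (2 : ℝ≥0∞) ^ ((j : ℝ) * (1 - p)) *
      (∑ n ∈ Finset.Ico (2 ^ j) (2 ^ (j + 1)), ENNReal.ofReal |x n|) ^ p) ^ (1 / p)

open Finset

namespace ENNReal

theorem tsum_mul_tsum_eq_tsum_sum_range (f g : ℕ → ℝ≥0∞) :
    (∑' n, f n) * ∑' n, g n = ∑' n, ∑ k ∈ range (n + 1), f k * g (n - k) := by
  simp_rw [← Nat.sum_antidiagonal_eq_sum_range_succ fun k l => f k * g l, ← Finset.tsum_subtype]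
  rw [← ENNReal.tsum_sigma' (fun x : Σ n : ℕ, antidiagonal n => f x.2.1.1 * g x.2.1.2),
    ← HasAntidiagonal.sigmaAntidiagonalEquivProd.symm.tsum_eq]
  change _ = ∑' c : ℕ × ℕ, f c.1 * g c.2
  rw [ENNReal.tsum_prod (f := fun a b => f a * g b), ← ENNReal.tsum_mul_right]
  simp_rw [← ENNReal.tsum_mul_left]

theorem mul_inv_mul_rpow {w : ℝ≥0∞} (hw₀ : w ≠ 0) (hw : w ≠ ⊤) {p : ℝ} (hp : 0 ≤ p)
    (s : ℝ≥0∞) : w * (w⁻¹ * s) ^ p = w ^ (1 - p) * s ^ p := by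
  rw [ENNReal.mul_rpow_of_nonneg _ _ hp, ← mul_assoc, ENNReal.inv_rpow, ← ENNReal.rpow_neg,
    sub_eq_add_neg, ENNReal.rpow_add _ _ hw₀ hw, ENNReal.rpow_one]

theorem rpow_sum_range_le_geometric {p : ℝ} (hp : 1 ≤ p) {u : ℝ≥0∞} (hu₀ : u ≠ 0)
    (hu : u ≠ ⊤) (t : ℕ → ℝ≥0∞) (j : ℕ) :
    (∑ i ∈ range (j + 1), t i) ^ p ≤
      (1 - u)⁻¹ ^ (p - 1) * ∑ i ∈ range (j + 1), (u ^ (1 - p)) ^ (j - i) * t i ^ p := by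
  have hp₀ : 0 < p := by linarith
  have holder := inner_le_weight_mul_Lp_of_nonneg (range (j + 1)) hp
    (fun i => u ^ (j - i)) (fun i => (u ^ (j - i))⁻¹ * t i)
  simp only [ENNReal.mul_inv_cancel_left (pow_ne_zero _ hu₀) (pow_ne_top hu),
    mul_inv_mul_rpow (pow_ne_zero _ hu₀) (pow_ne_top hu) hp₀.le, ← rpow_natCast_mul,
    mul_comm _ (1 - p), rpow_mul_natCast] at holder
  have hweights : ∑ i ∈ range (j + 1), u ^ (j - i) ≤ (1 - u)⁻¹ := by
    rw [← ENNReal.tsum_geometric]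
    exact (sum_range_reflect (fun k => u ^ k) (j + 1)).trans_le (ENNReal.sum_le_tsum _)
  calc (∑ i ∈ range (j + 1), t i) ^ p
      ≤ ((∑ i ∈ range (j + 1), u ^ (j - i)) ^ (1 - p⁻¹) *
          (∑ i ∈ range (j + 1), (u ^ (1 - p)) ^ (j - i) * t i ^ p) ^ p⁻¹) ^ p :=
        ENNReal.rpow_le_rpow holder hp₀.le
    _ = (∑ i ∈ range (j + 1), u ^ (j - i)) ^ (p - 1) *
          ∑ i ∈ range (j + 1), (u ^ (1 - p)) ^ (j - i) * t i ^ p := by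
        rw [ENNReal.mul_rpow_of_nonneg _ _ hp₀.le, ← ENNReal.rpow_mul, ← ENNReal.rpow_mul,
          inv_mul_cancel₀ hp₀.ne', ENNReal.rpow_one, sub_mul, inv_mul_cancel₀ hp₀.ne', one_mul]
    _ ≤ (1 - u)⁻¹ ^ (p - 1) * ∑ i ∈ range (j + 1), (u ^ (1 - p)) ^ (j - i) * t i ^ p := by
        gcongr

theorem tsum_geometric_mul_rpow_sum_range_le {p : ℝ} (hp : 1 ≤ p) {u : ℝ≥0∞} (hu₀ : u ≠ 0)
    (hu : u ≠ ⊤) (r : ℝ≥0∞) (t : ℕ → ℝ≥0∞) :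
    ∑' j, r ^ j * (∑ i ∈ range (j + 1), t i) ^ p ≤
      (1 - u)⁻¹ ^ (p - 1) * (1 - r * u ^ (1 - p))⁻¹ * ∑' i, r ^ i * t i ^ p := by
  have hconv : ∀ j, r ^ j * ∑ i ∈ range (j + 1), (u ^ (1 - p)) ^ (j - i) * t i ^ p =
      ∑ i ∈ range (j + 1), r ^ i * t i ^ p * (r * u ^ (1 - p)) ^ (j - i) := by
    intro j
    rw [mul_sum]
    refine sum_congr rfl fun i hi => ?_
    rw [← Nat.add_sub_cancel' (Nat.le_of_lt_succ (mem_range.1 hi)), pow_add,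
      Nat.add_sub_cancel_left, mul_pow]
    ring
  calc ∑' j, r ^ j * (∑ i ∈ range (j + 1), t i) ^ p
      ≤ ∑' j, r ^ j * ((1 - u)⁻¹ ^ (p - 1) *
          ∑ i ∈ range (j + 1), (u ^ (1 - p)) ^ (j - i) * t i ^ p) := by
        gcongr with j
        exact rpow_sum_range_le_geometric hp hu₀ hu t j
    _ = (1 - u)⁻¹ ^ (p - 1) * ((∑' i, r ^ i * t i ^ p) * ∑' n, (r * u ^ (1 - p)) ^ n) := by
        simp only [mul_left_comm (r ^ _), hconv, ENNReal.tsum_mul_left,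
          tsum_mul_tsum_eq_tsum_sum_range]
    _ = _ := by rw [ENNReal.tsum_geometric]; ring

theorem exists_tsum_geometric_mul_rpow_sum_range_le {p : ℝ} (hp : 1 < p) {r : ℝ≥0∞}
    (hr₀ : r ≠ 0) (hr : r < 1) :
    ∃ C : ℝ, 0 < C ∧ ∀ t : ℕ → ℝ≥0∞,
      ∑' j, r ^ j * (∑ i ∈ range (j + 1), t i) ^ p ≤ ENNReal.ofReal C * ∑' i, r ^ i * t i ^ p := by
  have hexp : 0 < 1 / (2 * (p - 1)) := by
    have : 0 < p - 1 := by linarith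
    positivity
  set u := r ^ (1 / (2 * (p - 1)))
  have hu₀ : u ≠ 0 := (rpow_pos (pos_iff_ne_zero.2 hr₀) hr.ne_top).ne'
  have hu : u ≠ ⊤ := rpow_ne_top_of_nonneg hexp.le hr.ne_top
  have hru : r * u ^ (1 - p) = r ^ (1 / 2 : ℝ) := by
    have : (1 / 2 : ℝ) = 1 + 1 / (2 * (p - 1)) * (1 - p) := by
      field_simp [(by linarith : p - 1 ≠ 0)]
      ring
    rw [this, rpow_add _ _ hr₀ hr.ne_top, rpow_one, rpow_mul]
  set K := (1 - u)⁻¹ ^ (p - 1) * (1 - r ^ (1 / 2 : ℝ))⁻¹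
  have hK : K ≠ ⊤ := by
    refine mul_ne_top (rpow_ne_top_of_nonneg (by linarith) (inv_ne_top.2 ?_)) (inv_ne_top.2 ?_)
    · exact (tsub_pos_of_lt (rpow_lt_one hr hexp)).ne'
    · exact (tsub_pos_of_lt (rpow_lt_one hr (by norm_num))).ne'
  refine ⟨K.toReal + 1, by positivity, fun t => ?_⟩
  calc ∑' j, r ^ j * (∑ i ∈ range (j + 1), t i) ^ p ≤ K * ∑' i, r ^ i * t i ^ p := by
        simpa only [hru] using tsum_geometric_mul_rpow_sum_range_le hp.le hu₀ hu r t
    _ ≤ ENNReal.ofReal (K.toReal + 1) * ∑' i, r ^ i * t i ^ p := by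
        gcongr
        exact (le_ofReal_iff_toReal_le hK (by positivity)).2 (by linarith)

end ENNReal

theorem two_pow_mul_inv_two_pow_rpow (j k : ℕ) (p : ℝ) :
    (2 : ℝ≥0∞) ^ j * ((2 ^ k)⁻¹) ^ p = 2 ^ ((j : ℝ) - k * p) := by
  rw [← rpow_natCast, ← rpow_natCast, ← rpow_neg, ← rpow_mul,
    ← rpow_add _ _ two_ne_zero ofNat_ne_top, sub_eq_add_neg, neg_mul]

noncomputable def cesaroMean (a : ℕ → ℝ≥0∞) (m : ℕ) : ℝ≥0∞ :=
  (m : ℝ≥0∞)⁻¹ * ∑ k ∈ Icc 1 m, a k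

noncomputable def dyadicBlockSum (a : ℕ → ℝ≥0∞) (j : ℕ) : ℝ≥0∞ :=
  ∑ n ∈ Ico (2 ^ j) (2 ^ (j + 1)), a n

section Dyadic

variable (a : ℕ → ℝ≥0∞)

theorem card_Ico_two_pow (j : ℕ) : #(Ico (2 ^ j) (2 ^ (j + 1))) = 2 ^ j := by
  rw [Nat.card_Ico, pow_succ]
  omega

theorem sum_range_dyadicBlockSum (J : ℕ) :
    ∑ j ∈ range J, dyadicBlockSum a j = ∑ n ∈ Ico 1 (2 ^ J), a n := by
  induction J with
  | zero => simp
  | succ J ih =>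
    rw [sum_range_succ, ih, dyadicBlockSum,
      sum_Ico_consecutive a Nat.one_le_two_pow (Nat.pow_le_pow_right two_pos J.le_succ)]

theorem tsum_dyadicBlockSum : ∑' j, dyadicBlockSum a j = ∑' n, a (n + 1) := by
  have h : Filter.Tendsto (fun J : ℕ => 2 ^ J - 1) Filter.atTop Filter.atTop :=
    Filter.tendsto_atTop_mono (fun J => Nat.le_sub_one_of_lt J.lt_two_pow_self)
      Filter.tendsto_id
  rw [ENNReal.tsum_eq_iSup_nat' h (f := fun n => a (n + 1)), ENNReal.tsum_eq_iSup_nat]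
  congr 1 with J
  rw [sum_range_dyadicBlockSum, sum_Ico_eq_sum_range]
  simp only [add_comm 1]

theorem cesaroMean_le_of_mem_Ico {j m : ℕ} (hm : m ∈ Ico (2 ^ j) (2 ^ (j + 1))) :
    cesaroMean a m ≤ (2 ^ j)⁻¹ * ∑ i ∈ range (j + 1), dyadicBlockSum a i := by
  rw [mem_Ico] at hm
  rw [cesaroMean, sum_range_dyadicBlockSum]
  gcongr
  · exact_mod_cast hm.1
  · intro k hk
    simp only [mem_Icc, mem_Ico] at hk ⊢
    omega

theorem le_cesaroMean_of_mem_Ico {j m : ℕ} (hm : m ∈ Ico (2 ^ (j + 1)) (2 ^ (j + 2))) :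
    (2 ^ (j + 2))⁻¹ * dyadicBlockSum a j ≤ cesaroMean a m := by
  rw [mem_Ico] at hm
  have := Nat.one_le_two_pow (n := j)
  rw [cesaroMean, dyadicBlockSum]
  gcongr
  · exact_mod_cast hm.2.le
  · intro k hk
    simp only [mem_Icc, mem_Ico] at hk ⊢
    omega

theorem dyadicBlockSum_cesaroMean_rpow_le {p : ℝ} (hp : 0 ≤ p) (j : ℕ) :
    dyadicBlockSum (fun m => cesaroMean a m ^ p) j ≤
      (2 ^ (1 - p)) ^ j * (∑ i ∈ range (j + 1), dyadicBlockSum a i) ^ p := by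
  calc dyadicBlockSum (fun m => cesaroMean a m ^ p) j
      ≤ ∑ _m ∈ Ico (2 ^ j) (2 ^ (j + 1)),
          ((2 ^ j)⁻¹ * ∑ i ∈ range (j + 1), dyadicBlockSum a i) ^ p :=
        sum_le_sum fun m hm => rpow_le_rpow (cesaroMean_le_of_mem_Ico a hm) hp
    _ = _ := by
      rw [sum_const, card_Ico_two_pow, nsmul_eq_mul, mul_rpow_of_nonneg _ _ hp, ← mul_assoc,
        Nat.cast_pow, Nat.cast_ofNat, two_pow_mul_inv_two_pow_rpow, ← rpow_mul_natCast]
      ring_nf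

theorem le_dyadicBlockSum_cesaroMean_rpow {p : ℝ} (hp : 0 ≤ p) (j : ℕ) :
    2 ^ (1 - 2 * p) * ((2 ^ (1 - p)) ^ j * dyadicBlockSum a j ^ p) ≤
      dyadicBlockSum (fun m => cesaroMean a m ^ p) (j + 1) := by
  calc 2 ^ (1 - 2 * p) * ((2 ^ (1 - p)) ^ j * dyadicBlockSum a j ^ p)
      = ∑ _m ∈ Ico (2 ^ (j + 1)) (2 ^ (j + 2)), ((2 ^ (j + 2))⁻¹ * dyadicBlockSum a j) ^ p := by
        rw [sum_const, card_Ico_two_pow, nsmul_eq_mul, mul_rpow_of_nonneg _ _ hp, ← mul_assoc,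
          ← mul_assoc, Nat.cast_pow, Nat.cast_ofNat, two_pow_mul_inv_two_pow_rpow,
          ← rpow_mul_natCast, ← rpow_add _ _ two_ne_zero ofNat_ne_top]
        push_cast
        ring_nf
    _ ≤ dyadicBlockSum (fun m => cesaroMean a m ^ p) (j + 1) :=
        sum_le_sum fun m hm => rpow_le_rpow (le_cesaroMean_of_mem_Ico a hm) hp

end Dyadic

theorem cesNorm_eq_tsum_dyadicBlockSum (p : ℝ) (x : ℕ → ℝ) :
    cesNorm p x = (∑' j, dyadicBlockSum
      (fun m => cesaroMean (fun n => ENNReal.ofReal |x n|) m ^ p) j) ^ (1 / p) := by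
  simp only [cesNorm, tsum_dyadicBlockSum, cesaroMean, Nat.cast_add, Nat.cast_one]

theorem cesBlock_eq_tsum_dyadicBlockSum (p : ℝ) (x : ℕ → ℝ) :
    cesBlock p x = (∑' j, (2 ^ (1 - p)) ^ j *
      dyadicBlockSum (fun n => ENNReal.ofReal |x n|) j ^ p) ^ (1 / p) := by
  simp only [cesBlock, dyadicBlockSum, mul_comm _ (1 - p), rpow_mul_natCast]

/-- Block form representation of `ces_p` (Grosse-Erdmann). -/
theorem stmt_1 (p : ℝ) (hp : 1 < p) :
    ∃ c C : ℝ, 0 < c ∧ 0 < C ∧ ∀ x : ℕ → ℝ,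
      ENNReal.ofReal c * cesBlock p x ≤ cesNorm p x ∧
        cesNorm p x ≤ ENNReal.ofReal C * cesBlock p x := by
  have hp₀ : 0 < p := by linarith
  obtain ⟨C, hC, hardy⟩ := exists_tsum_geometric_mul_rpow_sum_range_le hp (r := 2 ^ (1 - p))
    (rpow_pos two_pos ofNat_ne_top).ne' (rpow_lt_one_of_one_lt_of_neg one_lt_two (by linarith))
  refine ⟨(2 ^ (1 - 2 * p)) ^ (1 / p), C ^ (1 / p), by positivity, by positivity, fun x => ?_⟩
  set a := fun n => ENNReal.ofReal |x n|
  rw [← ofReal_rpow_of_pos hC, ← ofReal_rpow_of_pos (by positivity), ← ofReal_rpow_of_pos two_pos,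
    ofReal_ofNat, cesNorm_eq_tsum_dyadicBlockSum, cesBlock_eq_tsum_dyadicBlockSum,
    ← mul_rpow_of_nonneg _ _ (by positivity), ← mul_rpow_of_nonneg _ _ (by positivity)]
  constructor <;> refine rpow_le_rpow ?_ (by positivity)
  · rw [← ENNReal.tsum_mul_left]
    calc _ ≤ ∑' j, dyadicBlockSum (fun m => cesaroMean a m ^ p) (j + 1) :=
          ENNReal.tsum_le_tsum fun j => le_dyadicBlockSum_cesaroMean_rpow a hp₀.le j
      _ ≤ _ := ENNReal.tsum_comp_le_tsum_of_injective Nat.succ_injective _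
  · exact (ENNReal.tsum_le_tsum fun j => dyadicBlockSum_cesaroMean_rpow_le a hp₀.le j).trans
      (hardy _)
end

section
/- Let 1 < p < ∞ and define, for a Lebesgue-measurable nonnegative f : (0,∞) → ℝ, the Hardy average (ℋf)(x) = (1/x)∫_0^x f(t) dt. There exist constants c, C > 0, depending only on p, such that for every such f: c · ‖f‖_{Ces_p} ≤ ‖ℋf‖_{Ces_p} ≤ C · ‖f‖_{Ces_p}, as an inequality of values in [0,∞]. In particular, ‖f‖_{Ces_p} is finite if and only if ‖ℋf‖_{Ces_p} is finite. -/
open ENNReal MeasureTheory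

/-- The Cesàro norm `(∫_0^∞ ((1/x)∫_0^x g(t) dt)^p dx)^{1/p}` of an `[0,∞]`-valued
function on `(0,∞)`, with all integrals Lebesgue integrals. -/
noncomputable def CesNormE (p : ℝ) (g : ℝ → ℝ≥0∞) : ℝ≥0∞ :=
  (∫⁻ x in Set.Ioi (0 : ℝ),
      ((ENNReal.ofReal x)⁻¹ * ∫⁻ t in Set.Ioc (0 : ℝ) x, g t) ^ p) ^ (1 / p)

/-- The Hardy average `(ℋf)(x) = (1/x)∫_0^x f(t) dt` of a nonnegative function. -/
noncomputable def hardyAvg (f : ℝ → ℝ) : ℝ → ℝ≥0∞ :=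
  fun x => (ENNReal.ofReal x)⁻¹ * ∫⁻ t in Set.Ioc (0 : ℝ) x, ENNReal.ofReal (f t)

open Set

/-!
Write `H g x = x⁻¹ ∫₀ˣ g`, so that `‖g‖_{Ces_p} = ‖H g‖_{L^p(0,∞)}` and the claim compares
`‖H (H g)‖_p` with `‖H g‖_p`. The upper bound is Hardy's inequality `‖H φ‖_p ≤ p' ‖φ‖_p`, obtained
from Hölder's inequality with the weight `t^{1/(p p')}` followed by Fubini. The lower bound holds
because `H g` is almost decreasing: for `x/2 < t ≤ x` one has `H g t ≥ ½ H g (x/2)`, hence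
`H (H g) x ≥ ¼ H g (x/2)`, and the dilation `x ↦ x/2` only doubles the `L^p` integral.
-/

lemma ENNReal.rpow_mul_rpow_one_div {p : ℝ} (hp : 0 < p) (c b : ℝ≥0∞) :
    (c ^ p * b) ^ (1 / p) = c * b ^ (1 / p) := by
  rw [ENNReal.mul_rpow_of_nonneg _ _ (one_div_pos.mpr hp).le, ← ENNReal.rpow_mul,
    mul_one_div_cancel hp.ne', ENNReal.rpow_one]

lemma lintegral_Ioc_ofReal_rpow {a x : ℝ} (ha : -1 < a) (hx : 0 ≤ x) :
    ∫⁻ t in Ioc 0 x, ENNReal.ofReal t ^ a =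
      ENNReal.ofReal x ^ (a + 1) / ENNReal.ofReal (a + 1) := by
  have hpos : ∀ t ∈ Ioc (0 : ℝ) x, 0 ≤ t ^ a := fun t ht => Real.rpow_nonneg ht.1.le a
  rw [setLIntegral_congr_fun measurableSet_Ioc fun t ht => ENNReal.ofReal_rpow_of_pos ht.1,
    ← ofReal_integral_eq_lintegral_ofReal (intervalIntegral.intervalIntegrable_rpow' ha).1
      ((ae_restrict_iff' measurableSet_Ioc).mpr (.of_forall hpos)),
    ← intervalIntegral.integral_of_le hx, integral_rpow (.inl ha), Real.zero_rpow (by linarith),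
    sub_zero, ENNReal.ofReal_div_of_pos (by linarith),
    ENNReal.ofReal_rpow_of_nonneg hx (by linarith)]

lemma lintegral_Ioi_ofReal_rpow {b t : ℝ} (hb : b < -1) (ht : 0 < t) :
    ∫⁻ x in Ioi t, ENNReal.ofReal x ^ b =
      ENNReal.ofReal t ^ (b + 1) / ENNReal.ofReal (-(b + 1)) := by
  have hpos : ∀ x ∈ Ioi t, 0 ≤ x ^ b := fun x hx => Real.rpow_nonneg (ht.trans hx).le b
  rw [setLIntegral_congr_fun measurableSet_Ioi
      fun x hx => ENNReal.ofReal_rpow_of_pos (ht.trans hx),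
    ← ofReal_integral_eq_lintegral_ofReal (integrableOn_Ioi_rpow_of_lt hb ht)
      ((ae_restrict_iff' measurableSet_Ioi).mpr (.of_forall hpos)),
    integral_Ioi_rpow_of_lt hb ht, neg_div, ← div_neg, ENNReal.ofReal_div_of_pos (by linarith),
    ENNReal.ofReal_rpow_of_pos ht]

lemma lintegral_Ioi_rpow_mul_lintegral_Ioc {b : ℝ} (hb : b < -1) {h : ℝ → ℝ≥0∞}
    (hh : Measurable h) :
    ∫⁻ x in Ioi 0, ENNReal.ofReal x ^ b * ∫⁻ t in Ioc 0 x, h t =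
      ∫⁻ t in Ioi 0, ENNReal.ofReal t ^ (b + 1) / ENNReal.ofReal (-(b + 1)) * h t := by
  set F : ℝ × ℝ → ℝ≥0∞ := {z | z.2 ≤ z.1}.indicator fun z => ENNReal.ofReal z.1 ^ b * h z.2
  have hF : Measurable F := ((ENNReal.measurable_ofReal.comp measurable_fst).pow_const _
    |>.mul (hh.comp measurable_snd)).indicator (measurableSet_le measurable_snd measurable_fst)
  have inner_t (x : ℝ) :
      ENNReal.ofReal x ^ b * ∫⁻ t in Ioc 0 x, h t = ∫⁻ t in Ioi 0, F (x, t) := by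
    rw [← lintegral_const_mul _ hh, ← Iic_inter_Ioi,
      ← Measure.restrict_restrict measurableSet_Iic, ← lintegral_indicator measurableSet_Iic]
    simp only [F, indicator_apply, mem_Iic, mem_ofPred_eq]
  have inner_x (t : ℝ) (ht : t ∈ Ioi 0) : ∫⁻ x in Ioi 0, F (x, t) =
      ENNReal.ofReal t ^ (b + 1) / ENNReal.ofReal (-(b + 1)) * h t := by
    have hsub : Ici t ⊆ Ioi 0 := Ici_subset_Ioi.mpr ht
    rw [← lintegral_Ioi_ofReal_rpow hb ht, ← lintegral_mul_const _ (by fun_prop),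
      Measure.restrict_congr_set (Ioi_ae_eq_Ici (a := t)), ← inter_eq_left.mpr hsub,
      ← Measure.restrict_restrict measurableSet_Ici, ← lintegral_indicator measurableSet_Ici]
    simp only [F, indicator_apply, mem_Ici, mem_ofPred_eq]
  rw [lintegral_congr inner_t,
    lintegral_lintegral_swap (f := fun x t => F (x, t)) hF.aemeasurable,
    setLIntegral_congr_fun measurableSet_Ioi inner_x]

lemma lintegral_Ioi_comp_div {ψ : ℝ → ℝ≥0∞} (hψ : Measurable ψ) {a : ℝ} (ha : 0 < a) :
    ∫⁻ x in Ioi 0, ψ (x / a) = ENNReal.ofReal a * ∫⁻ x in Ioi 0, ψ x := by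
  have hmeas : Measurable fun x : ℝ => x * a⁻¹ := measurable_id.mul_const _
  have hpre : (fun x : ℝ => x * a⁻¹) ⁻¹' Ioi 0 = Ioi 0 := by
    ext x
    simp only [mem_preimage, mem_Ioi, mul_pos_iff_of_pos_right (inv_pos.mpr ha)]
  have hmap : (volume.restrict (Ioi 0)).map (fun x : ℝ => x * a⁻¹) =
      ENNReal.ofReal a • volume.restrict (Ioi 0) := by
    rw [← hpre, ← Measure.restrict_map hmeas measurableSet_Ioi,
      Real.map_volume_mul_right (inv_ne_zero ha.ne'), inv_inv, abs_of_pos ha,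
      Measure.restrict_smul, hpre]
  simp_rw [div_eq_mul_inv]
  rw [← lintegral_map hψ hmeas, hmap, lintegral_smul_measure, smul_eq_mul]

lemma monotone_lintegral_Ioc (g : ℝ → ℝ≥0∞) : Monotone fun x => ∫⁻ t in Ioc 0 x, g t :=
  fun _ _ hab => lintegral_mono_set (Ioc_subset_Ioc_right hab)

noncomputable def hardyOp (g : ℝ → ℝ≥0∞) (x : ℝ) : ℝ≥0∞ :=
  (ENNReal.ofReal x)⁻¹ * ∫⁻ t in Ioc 0 x, g t

@[fun_prop]
lemma measurable_hardyOp (g : ℝ → ℝ≥0∞) : Measurable (hardyOp g) :=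
  ENNReal.measurable_ofReal.inv.mul (monotone_lintegral_Ioc g).measurable

lemma cesNormE_eq (p : ℝ) (g : ℝ → ℝ≥0∞) :
    CesNormE p g = (∫⁻ x in Ioi 0, hardyOp g x ^ p) ^ (1 / p) := rfl

lemma hardyAvg_eq_hardyOp (f : ℝ → ℝ) : hardyAvg f = hardyOp fun t => ENNReal.ofReal (f t) := rfl

lemma lintegral_Ioc_le_of_holderConjugate {p q : ℝ} (hpq : p.HolderConjugate q) {φ : ℝ → ℝ≥0∞}
    (hφ : Measurable φ) {x : ℝ} (hx : 0 < x) :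
    ∫⁻ t in Ioc 0 x, φ t ≤ (∫⁻ t in Ioc 0 x, φ t ^ p * ENNReal.ofReal t ^ q⁻¹) ^ (1 / p) *
      (ENNReal.ofReal x ^ q⁻¹ * ENNReal.ofReal q) ^ (1 / q) := by
  obtain ⟨e, he⟩ : ∃ e : ℝ, e = p⁻¹ * q⁻¹ := ⟨_, rfl⟩
  have hsplit : ∀ t ∈ Ioc (0 : ℝ) x,
      φ t = (φ t * ENNReal.ofReal t ^ e) * ENNReal.ofReal t ^ (-e) := fun t ht => by
    rw [mul_assoc, ← ENNReal.rpow_add _ _ (ENNReal.ofReal_pos.mpr ht.1).ne' ENNReal.ofReal_ne_top,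
      add_neg_cancel, ENNReal.rpow_zero, mul_one]
  have hfirst : ∀ t ∈ Ioc (0 : ℝ) x,
      (φ t * ENNReal.ofReal t ^ e) ^ p = φ t ^ p * ENNReal.ofReal t ^ q⁻¹ := fun t _ => by
    rw [ENNReal.mul_rpow_of_nonneg _ _ hpq.nonneg, ← ENNReal.rpow_mul,
      show e * p = q⁻¹ by rw [he]; field_simp [hpq.ne_zero]]
  have hsecond : ∀ t ∈ Ioc (0 : ℝ) x,
      (ENNReal.ofReal t ^ (-e)) ^ q = ENNReal.ofReal t ^ (-p⁻¹) := fun t _ => by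
    rw [← ENNReal.rpow_mul, show -e * q = -p⁻¹ by rw [he]; field_simp [hpq.symm.ne_zero]]
  have hweight : ∫⁻ t in Ioc 0 x, ENNReal.ofReal t ^ (-p⁻¹) =
      ENNReal.ofReal x ^ q⁻¹ * ENNReal.ofReal q := by
    rw [lintegral_Ioc_ofReal_rpow (by linarith [hpq.one_sub_inv, hpq.symm.inv_pos]) hx.le,
      neg_add_eq_sub, hpq.one_sub_inv, ENNReal.ofReal_inv_of_pos hpq.symm.pos, div_eq_mul_inv,
      inv_inv]
  calc ∫⁻ t in Ioc 0 x, φ t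
      = ∫⁻ t in Ioc 0 x, (φ t * ENNReal.ofReal t ^ e) * ENNReal.ofReal t ^ (-e) :=
        setLIntegral_congr_fun measurableSet_Ioc hsplit
    _ ≤ _ := ENNReal.lintegral_mul_le_Lp_mul_Lq _ hpq (by fun_prop) (by fun_prop)
    _ = _ := by
      rw [setLIntegral_congr_fun measurableSet_Ioc hfirst,
        setLIntegral_congr_fun measurableSet_Ioc hsecond, hweight]

lemma hardyOp_rpow_le {p q : ℝ} (hpq : p.HolderConjugate q) {φ : ℝ → ℝ≥0∞}
    (hφ : Measurable φ) {x : ℝ} (hx : 0 < x) :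
    hardyOp φ x ^ p ≤ ENNReal.ofReal q ^ (p - 1) *
      (ENNReal.ofReal x ^ (p⁻¹ - 2) * ∫⁻ t in Ioc 0 x, φ t ^ p * ENNReal.ofReal t ^ q⁻¹) := by
  set X := ENNReal.ofReal x
  set A := ∫⁻ t in Ioc 0 x, φ t ^ p * ENNReal.ofReal t ^ q⁻¹
  have hX0 : X ≠ 0 := (ENNReal.ofReal_pos.mpr hx).ne'
  have hp0 : 0 ≤ p := hpq.nonneg
  have hexp : p⁻¹ - 2 = -1 * p + q⁻¹ * (1 / q) * p := by
    have hp_ne := hpq.ne_zero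
    rw [one_div, ← hpq.one_sub_inv]; field_simp; ring
  calc hardyOp φ x ^ p
      ≤ (X⁻¹ * (A ^ (1 / p) * (X ^ q⁻¹ * ENNReal.ofReal q) ^ (1 / q))) ^ p := by
        unfold hardyOp
        gcongr
        exact lintegral_Ioc_le_of_holderConjugate hpq hφ hx
    _ = ENNReal.ofReal q ^ (p - 1) * (X ^ (p⁻¹ - 2) * A) := by
      rw [← ENNReal.rpow_neg_one X, ENNReal.mul_rpow_of_nonneg _ _ hpq.symm.one_div_nonneg]
      simp only [ENNReal.mul_rpow_of_nonneg _ _ hp0, ← ENNReal.rpow_mul]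
      rw [hexp, ENNReal.rpow_add _ _ hX0 ENNReal.ofReal_ne_top, one_div_mul_cancel hpq.ne_zero,
        ENNReal.rpow_one, one_div_mul_eq_div, hpq.div_conj_eq_sub_one]
      ring

theorem lintegral_hardyOp_rpow_le {p q : ℝ} (hpq : p.HolderConjugate q) {φ : ℝ → ℝ≥0∞}
    (hφ : Measurable φ) :
    ∫⁻ x in Ioi 0, hardyOp φ x ^ p ≤ ENNReal.ofReal q ^ p * ∫⁻ t in Ioi 0, φ t ^ p := by
  set Q := ENNReal.ofReal q
  have hQ0 : Q ≠ 0 := (ENNReal.ofReal_pos.mpr hpq.symm.pos).ne'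
  have hb : p⁻¹ - 2 < -1 := by linarith [hpq.one_sub_inv, hpq.symm.inv_pos]
  have hb1 : p⁻¹ - 2 + 1 = -q⁻¹ := by linarith [hpq.one_sub_inv]
  have hcancel (t : ℝ) (ht : t ∈ Ioi 0) :
      ENNReal.ofReal t ^ (p⁻¹ - 2 + 1) / ENNReal.ofReal (-(p⁻¹ - 2 + 1)) *
        (φ t ^ p * ENNReal.ofReal t ^ q⁻¹) = Q * φ t ^ p := by
    rw [hb1, neg_neg, ENNReal.ofReal_inv_of_pos hpq.symm.pos, div_eq_mul_inv, inv_inv]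
    calc ENNReal.ofReal t ^ (-q⁻¹) * Q * (φ t ^ p * ENNReal.ofReal t ^ q⁻¹)
        = Q * φ t ^ p * (ENNReal.ofReal t ^ (-q⁻¹) * ENNReal.ofReal t ^ q⁻¹) := by ring
      _ = Q * φ t ^ p := by
        rw [← ENNReal.rpow_add _ _ (ENNReal.ofReal_pos.mpr ht).ne' ENNReal.ofReal_ne_top,
          neg_add_cancel, ENNReal.rpow_zero, mul_one]
  have hmeas : Measurable fun x => ENNReal.ofReal x ^ (p⁻¹ - 2) *
      ∫⁻ t in Ioc 0 x, φ t ^ p * ENNReal.ofReal t ^ q⁻¹ :=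
    (ENNReal.measurable_ofReal.pow_const _).mul (monotone_lintegral_Ioc _).measurable
  calc ∫⁻ x in Ioi 0, hardyOp φ x ^ p
      ≤ ∫⁻ x in Ioi 0, Q ^ (p - 1) *
          (ENNReal.ofReal x ^ (p⁻¹ - 2) * ∫⁻ t in Ioc 0 x, φ t ^ p * ENNReal.ofReal t ^ q⁻¹) :=
        setLIntegral_mono (measurable_const.mul hmeas) fun x hx => hardyOp_rpow_le hpq hφ hx
    _ = Q ^ (p - 1) * (Q * ∫⁻ t in Ioi 0, φ t ^ p) := by
        rw [lintegral_const_mul _ hmeas, lintegral_Ioi_rpow_mul_lintegral_Ioc hb (by fun_prop),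
          setLIntegral_congr_fun measurableSet_Ioi hcancel, lintegral_const_mul _ (by fun_prop)]
    _ = Q ^ p * ∫⁻ t in Ioi 0, φ t ^ p := by
        rw [← mul_assoc, ENNReal.rpow_sub _ _ hQ0 ENNReal.ofReal_ne_top, ENNReal.rpow_one,
          ENNReal.div_mul_cancel hQ0 ENNReal.ofReal_ne_top]

lemma inv_four_mul_hardyOp_le (g : ℝ → ℝ≥0∞) {x : ℝ} (hx : 0 < x) :
    4⁻¹ * hardyOp g (x / 2) ≤ hardyOp (hardyOp g) x := by
  set X := ENNReal.ofReal x
  set Y := ENNReal.ofReal (x / 2)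
  set I := ∫⁻ t in Ioc 0 (x / 2), g t
  have hY0 : Y ≠ 0 := (ENNReal.ofReal_pos.mpr (half_pos hx)).ne'
  have hXY : X = 2 * Y := by
    rw [← ENNReal.ofReal_ofNat 2, ← ENNReal.ofReal_mul zero_le_two, mul_div_cancel₀ x two_ne_zero]
  have hlower : ∀ t ∈ Ioc (x / 2) x, X⁻¹ * I ≤ hardyOp g t := fun t ht =>
    mul_le_mul' (ENNReal.inv_le_inv.mpr (ENNReal.ofReal_le_ofReal ht.2))
      (monotone_lintegral_Ioc g ht.1.le)
  calc 4⁻¹ * hardyOp g (x / 2)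
      = X⁻¹ * (Y * (X⁻¹ * I)) := by
        rw [hXY, ENNReal.mul_inv (.inl two_ne_zero) (.inl ENNReal.ofNat_ne_top), hardyOp]
        calc 4⁻¹ * (Y⁻¹ * I) = 2⁻¹ * 2⁻¹ * (Y⁻¹ * I) * (Y * Y⁻¹) := by
              rw [ENNReal.mul_inv_cancel hY0 ENNReal.ofReal_ne_top, mul_one,
                ← ENNReal.mul_inv (.inl two_ne_zero) (.inl ENNReal.ofNat_ne_top)]
              norm_num
          _ = _ := by ring
    _ ≤ X⁻¹ * ∫⁻ t in Ioc (x / 2) x, hardyOp g t := by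
        gcongr
        calc Y * (X⁻¹ * I) = ∫⁻ _ in Ioc (x / 2) x, X⁻¹ * I := by
              rw [setLIntegral_const, Real.volume_Ioc, _root_.sub_half, mul_comm]
          _ ≤ _ := setLIntegral_mono (measurable_hardyOp g) hlower
    _ ≤ hardyOp (hardyOp g) x :=
        mul_le_mul_right (lintegral_mono_set (Ioc_subset_Ioc_left (half_pos hx).le)) _

lemma inv_four_rpow_mul_lintegral_hardyOp_rpow_le {p : ℝ} (hp : 0 ≤ p) (g : ℝ → ℝ≥0∞) :
    4⁻¹ ^ p * ∫⁻ x in Ioi 0, hardyOp g x ^ p ≤ ∫⁻ x in Ioi 0, hardyOp (hardyOp g) x ^ p := by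
  have hmeas : Measurable fun x => hardyOp g x ^ p := (measurable_hardyOp g).pow_const p
  calc 4⁻¹ ^ p * ∫⁻ x in Ioi 0, hardyOp g x ^ p
      ≤ 4⁻¹ ^ p * (ENNReal.ofReal 2 * ∫⁻ x in Ioi 0, hardyOp g x ^ p) := by
        gcongr
        exact le_mul_of_one_le_left' (by norm_num)
    _ = ∫⁻ x in Ioi 0, (4⁻¹ * hardyOp g (x / 2)) ^ p := by
        rw [← lintegral_Ioi_comp_div hmeas two_pos, ← lintegral_const_mul _ (by fun_prop)]
        simp only [ENNReal.mul_rpow_of_nonneg _ _ hp]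
    _ ≤ ∫⁻ x in Ioi 0, hardyOp (hardyOp g) x ^ p :=
        setLIntegral_mono (by fun_prop) fun x hx =>
          ENNReal.rpow_le_rpow (inv_four_mul_hardyOp_le g hx) hp

/-- The function-space case of `𝒞𝒞X = 𝒞X`: for nonnegative measurable `f`,
`‖ℋf‖_{Ces_p}` and `‖f‖_{Ces_p}` are two-sidedly comparable. -/
theorem stmt_7 (p : ℝ) (hp : 1 < p) :
    ∃ c C : ℝ, 0 < c ∧ 0 < C ∧ ∀ f : ℝ → ℝ, Measurable f → (∀ t, 0 ≤ f t) →
      ENNReal.ofReal c * CesNormE p (fun t => ENNReal.ofReal (f t)) ≤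
          CesNormE p (hardyAvg f) ∧
        CesNormE p (hardyAvg f) ≤
          ENNReal.ofReal C * CesNormE p (fun t => ENNReal.ofReal (f t)) := by
  have hp0 : 0 < p := by linarith
  have hpq := Real.HolderConjugate.conjExponent hp
  refine ⟨1 / 4, p.conjExponent, by norm_num, hpq.symm.pos, fun f _ _ => ?_⟩
  have hquarter : ENNReal.ofReal (1 / 4) = 4⁻¹ := by
    rw [one_div, ENNReal.ofReal_inv_of_pos four_pos, ENNReal.ofReal_ofNat]
  rw [hardyAvg_eq_hardyOp, cesNormE_eq, cesNormE_eq, hquarter,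
    ← ENNReal.rpow_mul_rpow_one_div hp0, ← ENNReal.rpow_mul_rpow_one_div hp0]
  constructor
  · gcongr
    exact inv_four_rpow_mul_lintegral_hardyOp_rpow_le hp0.le _
  · gcongr
    exact lintegral_hardyOp_rpow_le hpq (measurable_hardyOp _)
end

section
/- Let 1 < p < ∞ and let q satisfy 1/p + 1/q = 1. There exist constants c, C > 0, depending only on p, such that for every real sequence z = (z_n)_{n≥1}: c · ‖z‖_{g_q} ≤ sup{ ‖z·x‖_{ces_p} : x a real sequence with ‖x‖_{ℓ_p} ≤ 1 } ≤ C · ‖z‖_{g_q}, where z·x denotes the coordinatewise product and all quantities take values in [0,∞]. -/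
/-!
Upper bound. Split `z_k x_k = (z_k k^(-e)) (x_k k^e)`, `e = (p - 1) / (2p)`, in Hölder's inequality.
Abel summation turns the `g_q` bound `∑_{k ≤ j} |z_k|^q ≤ j ‖z‖^q` into
`∑_{k ≤ N} |z_k|^q k^(-1/2) ≤ 2 ‖z‖^q N^(1/2)`, so the `p`-th power of the `N`-th Cesàro mean of
`z x` is at most `2^(p-1) ‖z‖^p N^(-β) ∑_{k ≤ N} |x_k|^p k^(β-1)` with `β = (p + 1) / 2`. Summing
over `N` and exchanging the sums, the tail `∑_{N ≥ k} N^(-β) ≤ β / (β - 1) k^(1-β)` cancels the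
weight and leaves `‖x‖_p^p`.

Lower bound. For fixed `N` and `S = ∑_{k ≤ N} |z_k|^q`, the sequence `x_k = |z_k|^(q-1) / S^(1/p)`
on `[1, N]` (the equality case of Hölder) has `‖x‖_p ≤ 1`, and `∑_{k ≤ m} |z_k x_k| ≥ S^(1/q)`
for all `m ≥ N`. The `N` Cesàro means of index in `[N, 2N)` are then all at least
`S^(1/q) / (2N)`, whence `‖z x‖_{ces_p} ≥ N^(1/p) S^(1/q) / (2N) = (S / N)^(1/q) / 2`.
-/

open ENNReal

/-- The `ℓ_p` norm `‖x‖_{ℓ_p} = (∑_{n=1}^∞ |x_n|^p)^{1/p}` of a real sequence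
(indexed so that the entries of the sequence are `x 1, x 2, …`). -/
noncomputable def lpSeqNorm (p : ℝ) (x : ℕ → ℝ) : ℝ≥0∞ :=
  (∑' n : ℕ, ENNReal.ofReal |x (n + 1)| ^ p) ^ (1 / p)

/-- Bennett's norm `‖x‖_{g_q} = sup_{n≥1} ((1/n)∑_{k=1}^n |x_k|^q)^{1/q}`. -/
noncomputable def gNorm (q : ℝ) (x : ℕ → ℝ) : ℝ≥0∞ :=
  ⨆ n : ℕ, (((n : ℝ≥0∞) + 1)⁻¹ * ∑ k ∈ Finset.Icc 1 (n + 1), ENNReal.ofReal |x k| ^ q) ^ (1 / q)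

open Finset

theorem sum_Icc_one_eq_sum_range {M : Type*} [AddCommMonoid M] (f : ℕ → M) (n : ℕ) :
    ∑ k ∈ Icc 1 n, f k = ∑ i ∈ range n, f (i + 1) := by
  rw [range_eq_Ico, sum_Ico_add', ← Ico_add_one_right_eq_Icc]

theorem sum_Icc_rpow_neg_le {α : ℝ} (hα0 : 0 ≤ α) (hα1 : α < 1) (m : ℕ) :
    ∑ k ∈ Icc 1 m, (k : ℝ) ^ (-α) ≤ (m : ℝ) ^ (1 - α) / (1 - α) := by
  have hα : 0 < 1 - α := by linarith
  rcases Nat.eq_zero_or_pos m with rfl | hm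
  · simp [Real.zero_rpow hα.ne']
  have hint : ∑ i ∈ Ico 1 m, ((i + 1 : ℕ) : ℝ) ^ (-α) ≤ ∫ x in (1 : ℕ)..(m : ℝ), x ^ (-α) :=
    AntitoneOn.sum_le_integral_Ico hm fun x hx y _ hxy =>
      Real.rpow_le_rpow_of_nonpos (lt_of_lt_of_le (by norm_num) hx.1) hxy (by linarith)
  rw [integral_rpow (Or.inl (by linarith)), show -α + 1 = 1 - α by ring, Nat.cast_one,
    Real.one_rpow, le_div_iff₀ hα] at hint
  rw [sum_Icc_one_eq_sum_range, range_eq_Ico, sum_eq_sum_Ico_succ_bot hm, le_div_iff₀ hα]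
  push_cast at hint ⊢
  rw [Real.one_rpow]
  nlinarith

theorem sum_Ico_rpow_neg_le {β : ℝ} (hβ : 1 < β) (k M : ℕ) :
    ∑ n ∈ Ico k M, ((n : ℝ) + 1) ^ (-β) ≤ β / (β - 1) * ((k : ℝ) + 1) ^ (1 - β) := by
  have hβ1 : 0 < β - 1 := by linarith
  rcases le_or_gt M k with hMk | hkM
  · rw [Ico_eq_empty_of_le hMk, sum_empty]; positivity
  have hint : ∑ i ∈ Ico (k + 1) M, ((i + 1 : ℕ) : ℝ) ^ (-β) ≤
      ∫ x in (k + 1 : ℕ)..(M : ℝ), x ^ (-β) :=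
    AntitoneOn.sum_le_integral_Ico hkM fun x hx y _ hxy =>
      Real.rpow_le_rpow_of_nonpos (lt_of_lt_of_le (by positivity) hx.1) hxy (by linarith)
  have h0 : (0 : ℝ) ∉ Set.uIcc ((k + 1 : ℕ) : ℝ) M := by
    rw [Set.mem_uIcc]; push_cast; norm_cast; omega
  rw [integral_rpow (Or.inr ⟨by linarith, h0⟩), show -β + 1 = 1 - β by ring] at hint
  have hM : 0 ≤ (M : ℝ) ^ (1 - β) := by positivity
  have hk : ((k : ℝ) + 1) ^ (-β) ≤ ((k : ℝ) + 1) ^ (1 - β) :=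
    Real.rpow_le_rpow_of_exponent_le (by linarith [k.cast_nonneg (α := ℝ)]) (by linarith)
  rw [sum_eq_sum_Ico_succ_bot hkM]
  push_cast at hint
  rw [← neg_div_neg_eq, neg_sub, neg_sub, le_div_iff₀ hβ1] at hint
  rw [div_mul_eq_mul_div, le_div_iff₀ hβ1]
  nlinarith

theorem sum_mul_le_mul_sum_of_sum_le {a w : ℕ → ℝ} {B : ℝ}
    (hw : ∀ k, 0 ≤ w k) (hw_anti : ∀ k, 1 ≤ k → w (k + 1) ≤ w k)
    (ha : ∀ j, ∑ k ∈ Icc 1 j, a k ≤ j * B) (m : ℕ) :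
    ∑ k ∈ Icc 1 m, a k * w k ≤ B * ∑ k ∈ Icc 1 m, w k := by
  -- Abel summation, carrying along the nonnegative slack `m * B - ∑_{k ≤ m} a k`
  suffices key : ∀ m, ∑ k ∈ Icc 1 m, a k * w k + (m * B - ∑ k ∈ Icc 1 m, a k) * w m
      ≤ B * ∑ k ∈ Icc 1 m, w k by
    nlinarith [key m, mul_nonneg (sub_nonneg.2 (ha m)) (hw m)]
  intro m
  induction m with
  | zero => simp
  | succ m ih =>
    simp only [sum_Icc_succ_top (Nat.le_add_left 1 m), Nat.cast_succ]
    rcases Nat.eq_zero_or_pos m with rfl | hm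
    · simp; linarith
    · nlinarith [mul_le_mul_of_nonneg_left (hw_anti m hm) (sub_nonneg.2 (ha m))]

theorem sum_rpow_mul_rpow_neg_half_le {q g : ℝ} {a : ℕ → ℝ}
    (hA : ∀ j, ∑ k ∈ Icc 1 j, a k ^ q ≤ j * g ^ q) (hg : 0 ≤ g) (N : ℕ) :
    ∑ k ∈ Icc 1 N, a k ^ q * (k : ℝ) ^ (-(1 / 2 : ℝ)) ≤ 2 * g ^ q * (N : ℝ) ^ (1 / 2 : ℝ) := by
  have hw_anti : ∀ k : ℕ, 1 ≤ k → ((k + 1 : ℕ) : ℝ) ^ (-(1 / 2 : ℝ)) ≤ (k : ℝ) ^ (-(1 / 2 : ℝ)) :=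
    fun k hk => Real.rpow_le_rpow_of_nonpos (by exact_mod_cast hk) (by push_cast; linarith)
      (by norm_num)
  calc ∑ k ∈ Icc 1 N, a k ^ q * (k : ℝ) ^ (-(1 / 2 : ℝ))
      ≤ g ^ q * ∑ k ∈ Icc 1 N, (k : ℝ) ^ (-(1 / 2 : ℝ)) :=
        sum_mul_le_mul_sum_of_sum_le (fun k => by positivity) hw_anti hA N
    _ ≤ g ^ q * ((N : ℝ) ^ (1 - 1 / 2 : ℝ) / (1 - 1 / 2)) := by
        gcongr; exact sum_Icc_rpow_neg_le (by norm_num) (by norm_num) N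
    _ = 2 * g ^ q * (N : ℝ) ^ (1 / 2 : ℝ) := by norm_num; ring

theorem sum_mul_rpow_le {p q : ℝ} (hpq : p.HolderConjugate q) {a b : ℕ → ℝ}
    (ha : ∀ k, 0 ≤ a k) (hb : ∀ k, 0 ≤ b k) {g : ℝ} (hg : 0 ≤ g)
    (hA : ∀ j, ∑ k ∈ Icc 1 j, a k ^ q ≤ j * g ^ q) (N : ℕ) :
    (∑ k ∈ Icc 1 N, a k * b k) ^ p ≤
      2 ^ (p - 1) * g ^ p * (N : ℝ) ^ ((p - 1) / 2) *
        ∑ k ∈ Icc 1 N, b k ^ p * (k : ℝ) ^ ((p - 1) / 2) := by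
  set X := ∑ k ∈ Icc 1 N, b k ^ p * (k : ℝ) ^ ((p - 1) / 2)
  set Y := ∑ k ∈ Icc 1 N, a k ^ q * (k : ℝ) ^ (-(1 / 2 : ℝ))
  have hp := hpq.pos
  have hX : 0 ≤ X := sum_nonneg fun k _ => mul_nonneg (Real.rpow_nonneg (hb k) _) (by positivity)
  have hY : 0 ≤ Y := sum_nonneg fun k _ => mul_nonneg (Real.rpow_nonneg (ha k) _) (by positivity)
  have holder : ∑ k ∈ Icc 1 N, a k * b k ≤ X ^ (1 / p) * Y ^ (1 / q) := by
    set e := (p - 1) / 2 / p with he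
    have h := Real.inner_le_Lp_mul_Lq_of_nonneg (Icc 1 N) hpq
      (f := fun k => b k * (k : ℝ) ^ e) (g := fun k => a k * (k : ℝ) ^ (-e))
      (fun k _ => mul_nonneg (hb k) (by positivity)) (fun k _ => mul_nonneg (ha k) (by positivity))
    have e1 : ∀ k ∈ Icc 1 N, b k * (k : ℝ) ^ e * (a k * (k : ℝ) ^ (-e)) = a k * b k := by
      intro k hk
      have hk0 : (0 : ℝ) < k := by simp at hk; exact_mod_cast hk.1
      rw [Real.rpow_neg hk0.le]; field_simp
    have e2 : ∀ k ∈ Icc 1 N, (b k * (k : ℝ) ^ e) ^ p = b k ^ p * (k : ℝ) ^ ((p - 1) / 2) := by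
      intro k _
      rw [Real.mul_rpow (hb k) (by positivity), ← Real.rpow_mul (Nat.cast_nonneg k),
        div_mul_cancel₀ _ hp.ne']
    have e3 : ∀ k ∈ Icc 1 N, (a k * (k : ℝ) ^ (-e)) ^ q = a k ^ q * (k : ℝ) ^ (-(1 / 2 : ℝ)) := by
      intro k _
      rw [Real.mul_rpow (ha k) (by positivity), ← Real.rpow_mul (Nat.cast_nonneg k)]
      congr 2
      have hc := hpq.sub_one_mul_conj
      have := hp.ne'
      rw [he]
      field_simp
      linear_combination -hc
    rwa [sum_congr rfl e1, sum_congr rfl e2, sum_congr rfl e3] at h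
  calc (∑ k ∈ Icc 1 N, a k * b k) ^ p
      ≤ (X ^ (1 / p) * Y ^ (1 / q)) ^ p := by
        gcongr; exact sum_nonneg fun k _ => mul_nonneg (ha k) (hb k)
    _ = Y ^ (p - 1) * X := by
        rw [Real.mul_rpow (by positivity) (by positivity), ← Real.rpow_mul hX,
          ← Real.rpow_mul hY, one_div_mul_cancel hp.ne', Real.rpow_one, one_div_mul_eq_div,
          hpq.div_conj_eq_sub_one, mul_comm]
    _ ≤ (2 * g ^ q * (N : ℝ) ^ (1 / 2 : ℝ)) ^ (p - 1) * X := by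
        gcongr
        · linarith [hpq.sub_one_pos]
        · exact sum_rpow_mul_rpow_neg_half_le hA hg N
    _ = 2 ^ (p - 1) * g ^ p * (N : ℝ) ^ ((p - 1) / 2) * X := by
        rw [Real.mul_rpow (by positivity) (by positivity),
          Real.mul_rpow (by positivity) (by positivity), ← Real.rpow_mul hg,
          ← Real.rpow_mul (Nat.cast_nonneg N), mul_comm q, hpq.sub_one_mul_conj]
        ring_nf

theorem mean_mul_rpow_le {p q : ℝ} (hpq : p.HolderConjugate q) {a b : ℕ → ℝ}
    (ha : ∀ k, 0 ≤ a k) (hb : ∀ k, 0 ≤ b k) {g : ℝ} (hg : 0 ≤ g)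
    (hA : ∀ j, ∑ k ∈ Icc 1 j, a k ^ q ≤ j * g ^ q) (n : ℕ) :
    ((∑ k ∈ Icc 1 (n + 1), a k * b k) / (n + 1)) ^ p ≤
      2 ^ (p - 1) * g ^ p * (((n : ℝ) + 1) ^ (-((p + 1) / 2)) *
        ∑ k ∈ Icc 1 (n + 1), b k ^ p * (k : ℝ) ^ ((p + 1) / 2 - 1)) := by
  have hN : (0 : ℝ) < n + 1 := by positivity
  have h := sum_mul_rpow_le hpq ha hb hg hA (n + 1)
  push_cast at h
  rw [Real.div_rpow (sum_nonneg fun k _ => mul_nonneg (ha k) (hb k)) hN.le, div_eq_mul_inv,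
    ← Real.rpow_neg hN.le, show (p + 1) / 2 - 1 = (p - 1) / 2 by ring,
    show -((p + 1) / 2) = (p - 1) / 2 + -p by ring, Real.rpow_add hN]
  calc _ ≤ 2 ^ (p - 1) * g ^ p * ((n + 1 : ℝ) ^ ((p - 1) / 2) *
        ∑ k ∈ Icc 1 (n + 1), b k ^ p * (k : ℝ) ^ ((p - 1) / 2)) * (n + 1 : ℝ) ^ (-p) := by
        gcongr; linarith
    _ = _ := by ring

theorem ofReal_mean_rpow {s : Finset ℕ} {f : ℕ → ℝ} (hf : ∀ k ∈ s, 0 ≤ f k) (n : ℕ) {r : ℝ}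
    (hr : 0 ≤ r) :
    (((n : ℝ≥0∞) + 1)⁻¹ * ∑ k ∈ s, ENNReal.ofReal (f k)) ^ r =
      ENNReal.ofReal (((∑ k ∈ s, f k) / (n + 1)) ^ r) := by
  have hN : ENNReal.ofReal ((n : ℝ) + 1) = (n : ℝ≥0∞) + 1 := by
    exact_mod_cast ofReal_natCast (n + 1)
  rw [← ofReal_sum_of_nonneg hf,
    ← ofReal_rpow_of_nonneg (div_nonneg (sum_nonneg hf) (by positivity)) hr,
    ofReal_div_of_pos (by positivity), ENNReal.div_eq_inv_mul, hN]

theorem cesNorm_eq {p : ℝ} (hp : 0 ≤ p) (y : ℕ → ℝ) :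
    cesNorm p y =
      (∑' n : ℕ, ENNReal.ofReal (((∑ k ∈ Icc 1 (n + 1), |y k|) / (n + 1)) ^ p)) ^ (1 / p) := by
  simp only [cesNorm, ofReal_mean_rpow (fun k _ => abs_nonneg (y k)) _ hp]

theorem gNorm_eq {q : ℝ} (hq : 0 < q) (z : ℕ → ℝ) :
    gNorm q z =
      ⨆ n : ℕ, ENNReal.ofReal (((∑ k ∈ Icc 1 (n + 1), |z k| ^ q) / (n + 1)) ^ (1 / q)) := by
  simp only [gNorm, ofReal_rpow_of_nonneg (abs_nonneg _) hq.le,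
    ofReal_mean_rpow (fun k _ => Real.rpow_nonneg (abs_nonneg (z k)) q) _ (one_div_nonneg.2 hq.le)]

theorem lpSeqNorm_eq {p : ℝ} (hp : 0 ≤ p) (x : ℕ → ℝ) :
    lpSeqNorm p x = (∑' n : ℕ, ENNReal.ofReal (|x (n + 1)| ^ p)) ^ (1 / p) := by
  simp only [lpSeqNorm, ofReal_rpow_of_nonneg (abs_nonneg _) hp]

theorem sum_rpow_le_of_gNorm_le {q g : ℝ} (hq : 0 < q) (hg : 0 ≤ g) {z : ℕ → ℝ}
    (hz : gNorm q z ≤ ENNReal.ofReal g) (j : ℕ) :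
    ∑ k ∈ Icc 1 j, |z k| ^ q ≤ j * g ^ q := by
  rcases j with _ | n
  · simp
  have h := (le_iSup _ n).trans (gNorm_eq hq z ▸ hz)
  rw [ofReal_le_ofReal_iff hg, one_div, Real.rpow_inv_le_iff_of_pos (by positivity) hg hq,
    div_le_iff₀ (by positivity)] at h
  push_cast
  linarith

theorem tsum_sum_range_eq_tsum_tsum (f : ℕ → ℕ → ℝ≥0∞) :
    ∑' n, ∑ k ∈ range (n + 1), f n k = ∑' k, ∑' n, if k ≤ n then f n k else 0 := by
  rw [← ENNReal.tsum_comm]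
  congr 1 with n
  rw [tsum_eq_sum (s := range (n + 1)) fun k hk => if_neg (by simpa [Nat.lt_succ_iff] using hk)]
  exact sum_congr rfl fun k hk => (if_pos (by simpa [Nat.lt_succ_iff] using hk)).symm

theorem tsum_tail_rpow_neg_le {β : ℝ} (hβ : 1 < β) (k : ℕ) :
    ∑' n : ℕ, (if k ≤ n then ENNReal.ofReal (((n : ℝ) + 1) ^ (-β)) else 0) ≤
      ENNReal.ofReal (β / (β - 1) * ((k : ℝ) + 1) ^ (1 - β)) := by
  refine ENNReal.tsum_le_of_sum_range_le fun M => ?_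
  rw [← sum_filter, show (range M).filter (k ≤ ·) = Ico k M by ext; simp; omega,
    ← ofReal_sum_of_nonneg fun n _ => by positivity]
  exact ofReal_le_ofReal (sum_Ico_rpow_neg_le hβ k M)

theorem tsum_ofReal_rpow_neg_mul_sum_le {β : ℝ} (hβ : 1 < β) {c : ℕ → ℝ} (hc : ∀ k, 0 ≤ c k) :
    ∑' n : ℕ, ENNReal.ofReal (((n : ℝ) + 1) ^ (-β) * ∑ k ∈ Icc 1 (n + 1), c k * (k : ℝ) ^ (β - 1)) ≤
      ENNReal.ofReal (β / (β - 1)) * ∑' k : ℕ, ENNReal.ofReal (c (k + 1)) := by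
  have hD : 0 ≤ β / (β - 1) := (div_pos (by linarith) (by linarith)).le
  set w : ℕ → ℝ≥0∞ := fun n => ENNReal.ofReal (((n : ℝ) + 1) ^ (-β))
  set d : ℕ → ℝ≥0∞ := fun k => ENNReal.ofReal (c (k + 1) * ((k : ℝ) + 1) ^ (β - 1))
  calc _ = ∑' n, ∑ k ∈ range (n + 1), w n * d k := by
        congr 1 with n
        rw [ofReal_mul (by positivity), sum_Icc_one_eq_sum_range,
          ofReal_sum_of_nonneg fun k _ => mul_nonneg (hc _) (by positivity), mul_sum]
        push_cast
        rfl
    _ = ∑' k, (∑' n, if k ≤ n then w n else 0) * d k := by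
        rw [tsum_sum_range_eq_tsum_tsum]
        simp only [← ENNReal.tsum_mul_right, ite_mul, zero_mul]
    _ ≤ ∑' k : ℕ, ENNReal.ofReal (β / (β - 1) * ((k : ℝ) + 1) ^ (1 - β)) * d k :=
        ENNReal.tsum_le_tsum fun k => by gcongr; exact tsum_tail_rpow_neg_le hβ k
    _ = ∑' k : ℕ, ENNReal.ofReal (β / (β - 1)) * ENNReal.ofReal (c (k + 1)) := by
        congr 1 with k
        have hk : (0 : ℝ) < k + 1 := by positivity
        rw [← ofReal_mul (by positivity), ← ofReal_mul hD, mul_mul_mul_comm,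
          ← Real.rpow_add hk, show 1 - β + (β - 1) = 0 by ring, Real.rpow_zero, mul_one]
    _ = _ := ENNReal.tsum_mul_left

noncomputable def cesMulConst (p : ℝ) : ℝ := (2 ^ (p - 1) * ((p + 1) / (p - 1))) ^ (1 / p)

theorem cesMulConst_pos {p : ℝ} (hp : 1 < p) : 0 < cesMulConst p := by
  have : 0 < p - 1 := by linarith
  unfold cesMulConst
  positivity

theorem cesNorm_mul_le {p q : ℝ} (hpq : p.HolderConjugate q) (z x : ℕ → ℝ) {g : ℝ} (hg : 0 ≤ g)
    (hz : gNorm q z ≤ ENNReal.ofReal g) :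
    cesNorm p (fun n => z n * x n) ≤ ENNReal.ofReal (cesMulConst p * g) * lpSeqNorm p x := by
  have hp := hpq.pos
  have hp1 := hpq.sub_one_pos
  set β := (p + 1) / 2 with hβ
  have hβ1 : 1 < β := by linarith
  set K := 2 ^ (p - 1) * g ^ p
  have hK : 0 ≤ K := by positivity
  have hterm : ∀ n : ℕ,
      ENNReal.ofReal (((∑ k ∈ Icc 1 (n + 1), |z k * x k|) / (n + 1)) ^ p) ≤
        ENNReal.ofReal K * ENNReal.ofReal (((n : ℝ) + 1) ^ (-β) *
          ∑ k ∈ Icc 1 (n + 1), |x k| ^ p * (k : ℝ) ^ (β - 1)) := fun n => by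
    rw [← ofReal_mul hK]
    simp only [abs_mul]
    exact ofReal_le_ofReal <| mean_mul_rpow_le hpq (fun k => abs_nonneg (z k))
      (fun k => abs_nonneg (x k)) hg (sum_rpow_le_of_gNorm_le hpq.symm.pos hg hz) n
  have hβD : β / (β - 1) = (p + 1) / (p - 1) := by
    rw [hβ, show (p + 1) / 2 - 1 = (p - 1) / 2 by ring, div_div_div_cancel_right₀ two_ne_zero]
  rw [cesNorm_eq hp.le, lpSeqNorm_eq hp.le]
  calc _ ≤ (∑' n : ℕ, ENNReal.ofReal K * ENNReal.ofReal (((n : ℝ) + 1) ^ (-β) *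
        ∑ k ∈ Icc 1 (n + 1), |x k| ^ p * (k : ℝ) ^ (β - 1))) ^ (1 / p) := by
        gcongr with n; exact hterm n
    _ ≤ (ENNReal.ofReal K * (ENNReal.ofReal (β / (β - 1)) *
        ∑' k : ℕ, ENNReal.ofReal (|x (k + 1)| ^ p))) ^ (1 / p) := by
        rw [ENNReal.tsum_mul_left]
        gcongr
        exact tsum_ofReal_rpow_neg_mul_sum_le hβ1 fun k => by positivity
    _ = _ := by
      rw [← mul_assoc, ← ofReal_mul hK, mul_rpow_of_nonneg _ _ (by positivity),
        ofReal_rpow_of_nonneg (by positivity) (by positivity), hβD, mul_right_comm,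
        Real.mul_rpow (by positivity) (by positivity), one_div p, Real.rpow_rpow_inv hg hp.ne',
        cesMulConst, one_div]

theorem iSup_cesNorm_le {p q : ℝ} (hpq : p.HolderConjugate q) (z : ℕ → ℝ) :
    ⨆ (x : ℕ → ℝ) (_ : lpSeqNorm p x ≤ 1), cesNorm p (fun n => z n * x n) ≤
      ENNReal.ofReal (cesMulConst p) * gNorm q z := by
  refine iSup₂_le fun x hx => ?_
  rcases eq_or_ne (gNorm q z) ⊤ with htop | htop
  · rw [htop, mul_top (ofReal_pos.2 (cesMulConst_pos hpq.lt)).ne']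
    exact le_top
  calc cesNorm p (fun n => z n * x n)
      ≤ ENNReal.ofReal (cesMulConst p * (gNorm q z).toReal) * lpSeqNorm p x :=
        cesNorm_mul_le hpq z x toReal_nonneg (ofReal_toReal htop).ge
    _ ≤ ENNReal.ofReal (cesMulConst p) * gNorm q z := by
        rw [ofReal_mul (cesMulConst_pos hpq.lt).le, ofReal_toReal htop]
        exact mul_le_of_le_one_right' hx

theorem le_cesNorm_of_le_sum {p : ℝ} (hp : 0 < p) {y : ℕ → ℝ} {A : ℝ} (hA : 0 ≤ A) (n : ℕ)
    (h : ∀ m, n ≤ m → A ≤ ∑ k ∈ Icc 1 (m + 1), |y k|) :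
    ENNReal.ofReal (((n : ℝ) + 1) ^ (1 / p) * (A / (2 * ((n : ℝ) + 1)))) ≤ cesNorm p y := by
  set N : ℝ := n + 1
  have hN : 0 < N := by positivity
  have hblock : N * (A / (2 * N)) ^ p ≤
      ∑ m ∈ Ico n (2 * n + 1), ((∑ k ∈ Icc 1 (m + 1), |y k|) / (m + 1)) ^ p := by
    have hcard : ((Ico n (2 * n + 1)).card : ℝ) = N := by
      rw [Nat.card_Ico, show 2 * n + 1 - n = n + 1 by omega]; push_cast; rfl
    rw [show N * (A / (2 * N)) ^ p = ∑ m ∈ Ico n (2 * n + 1), (A / (2 * N)) ^ p by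
      rw [sum_const, nsmul_eq_mul, hcard]]
    refine sum_le_sum fun m hm => ?_
    rw [mem_Ico] at hm
    have hm2 : (m : ℝ) + 1 ≤ 2 * N := by simp only [N]; norm_cast; omega
    gcongr
    exact h m hm.1
  rw [cesNorm_eq hp.le]
  calc ENNReal.ofReal (N ^ (1 / p) * (A / (2 * N)))
      = ENNReal.ofReal (N * (A / (2 * N)) ^ p) ^ (1 / p) := by
        rw [ofReal_rpow_of_nonneg (by positivity) (by positivity),
          Real.mul_rpow hN.le (by positivity), ← Real.rpow_mul (by positivity),
          mul_one_div_cancel hp.ne', Real.rpow_one]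
    _ ≤ _ := by
        gcongr
        refine (ofReal_le_ofReal hblock).trans ?_
        rw [ofReal_sum_of_nonneg fun m _ => by positivity]
        exact ENNReal.sum_le_tsum _

-- When the sum vanishes this is the zero sequence, by `x / 0 = 0`.
noncomputable def holderDual (p q : ℝ) (z : ℕ → ℝ) (N : ℕ) (k : ℕ) : ℝ :=
  if k ∈ Icc 1 N then |z k| ^ (q - 1) / (∑ j ∈ Icc 1 N, |z j| ^ q) ^ (1 / p) else 0

theorem lpSeqNorm_holderDual_le_one {p q : ℝ} (hpq : p.HolderConjugate q) (z : ℕ → ℝ) (N : ℕ) :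
    lpSeqNorm p (holderDual p q z N) ≤ 1 := by
  have hp := hpq.pos
  set S := ∑ j ∈ Icc 1 N, |z j| ^ q with hS_def
  have hS : 0 ≤ S := sum_nonneg fun j _ => by positivity
  have hterm : ∀ k ∈ Icc 1 N, |holderDual p q z N k| ^ p = |z k| ^ q / S := by
    intro k hk
    rw [holderDual, if_pos hk, ← hS_def, abs_of_nonneg (by positivity),
      Real.div_rpow (by positivity) (by positivity), ← Real.rpow_mul (abs_nonneg _),
      ← Real.rpow_mul hS, hpq.symm.sub_one_mul_conj, one_div_mul_cancel hp.ne', Real.rpow_one]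
  have hsupp : ∀ n ∉ range N, ENNReal.ofReal (|holderDual p q z N (n + 1)| ^ p) = 0 := by
    intro n hn
    rw [holderDual, if_neg (by simpa using hn), abs_zero, Real.zero_rpow hp.ne', ofReal_zero]
  rw [lpSeqNorm_eq hp.le, tsum_eq_sum hsupp,
    ← sum_Icc_one_eq_sum_range (fun k => ENNReal.ofReal (|holderDual p q z N k| ^ p)),
    ← ofReal_sum_of_nonneg fun k _ => by positivity, sum_congr rfl hterm, ← sum_div]
  exact ENNReal.rpow_le_one (ofReal_le_one.2 (div_self_le_one _)) (by positivity)

theorem sum_abs_mul_holderDual {p q : ℝ} (hpq : p.HolderConjugate q) (z : ℕ → ℝ) (N : ℕ) :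
    ∑ k ∈ Icc 1 N, |z k * holderDual p q z N k| = (∑ k ∈ Icc 1 N, |z k| ^ q) ^ (1 / q) := by
  set S := ∑ j ∈ Icc 1 N, |z j| ^ q with hS_def
  have hq := hpq.symm.pos
  have hS : 0 ≤ S := sum_nonneg fun j _ => by positivity
  have hterm : ∀ k ∈ Icc 1 N, |z k * holderDual p q z N k| = |z k| ^ q / S ^ (1 / p) := by
    intro k hk
    rw [holderDual, if_pos hk, ← hS_def, abs_mul,
      abs_of_nonneg (div_nonneg (Real.rpow_nonneg (abs_nonneg (z k)) _) (Real.rpow_nonneg hS _)),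
      mul_div_assoc', ← Real.rpow_one_add' (abs_nonneg _) (by linarith), add_sub_cancel]
  rw [sum_congr rfl hterm, ← sum_div, ← hS_def]
  rcases hS.eq_or_lt with hS0 | hSpos
  · rw [← hS0, zero_div, Real.zero_rpow (one_div_pos.2 hq).ne']
  · rw [show 1 / q = 1 - 1 / p by rw [one_div, one_div, hpq.one_sub_inv], Real.rpow_sub hSpos,
      Real.rpow_one]

theorem gNorm_le_two_mul_iSup_cesNorm {p q : ℝ} (hpq : p.HolderConjugate q) (z : ℕ → ℝ) :
    gNorm q z ≤ 2 * ⨆ (x : ℕ → ℝ) (_ : lpSeqNorm p x ≤ 1), cesNorm p (fun n => z n * x n) := by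
  have hp := hpq.pos
  have hq := hpq.symm.pos
  rw [gNorm_eq hq]
  refine iSup_le fun n => ?_
  set S := ∑ k ∈ Icc 1 (n + 1), |z k| ^ q
  set N : ℝ := n + 1
  have hN : 0 < N := by positivity
  have hS : 0 ≤ S := sum_nonneg fun k _ => by positivity
  have hNN : N ^ (1 / p) * N ^ (1 / q) = N := by
    rw [← Real.rpow_add hN, one_div, one_div, hpq.inv_add_inv_eq_one, Real.rpow_one]
  have hsum : ∀ m, n ≤ m → S ^ (1 / q) ≤ ∑ k ∈ Icc 1 (m + 1), |z k * holderDual p q z (n + 1) k| :=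
    fun m hm => (sum_abs_mul_holderDual hpq z (n + 1)).symm.le.trans <|
      sum_le_sum_of_subset_of_nonneg (Icc_subset_Icc_right (by omega)) fun _ _ _ => abs_nonneg _
  calc ENNReal.ofReal ((S / N) ^ (1 / q))
      = 2 * ENNReal.ofReal (N ^ (1 / p) * (S ^ (1 / q) / (2 * N))) := by
        rw [← ofReal_ofNat 2, ← ofReal_mul zero_le_two, Real.div_rpow hS hN.le]
        congr 1
        field_simp
        linear_combination -(S ^ (1 / q)) * hNN
    _ ≤ 2 * cesNorm p (fun k => z k * holderDual p q z (n + 1) k) := by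
        gcongr
        exact le_cesNorm_of_le_sum hp (by positivity) n hsum
    _ ≤ _ := by
        gcongr
        exact le_iSup₂ (f := fun x (_ : lpSeqNorm p x ≤ 1) => cesNorm p fun k => z k * x k)
          (holderDual p q z (n + 1)) (lpSeqNorm_holderDual_le_one hpq z (n + 1))

/-- Identification of the multiplier space `M(ℓ_p, ces_p)` with Bennett's space `g_q`. -/
theorem stmt_8 (p q : ℝ) (hp : 1 < p) (hpq : 1 / p + 1 / q = 1) :
    ∃ c C : ℝ, 0 < c ∧ 0 < C ∧ ∀ z : ℕ → ℝ,
      ENNReal.ofReal c * gNorm q z ≤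
          (⨆ (x : ℕ → ℝ) (_ : lpSeqNorm p x ≤ 1), cesNorm p (fun n => z n * x n)) ∧
        (⨆ (x : ℕ → ℝ) (_ : lpSeqNorm p x ≤ 1), cesNorm p (fun n => z n * x n)) ≤
          ENNReal.ofReal C * gNorm q z := by
  have hpq : p.HolderConjugate q :=
    Real.holderConjugate_iff.2 ⟨hp, by simpa only [one_div] using hpq⟩
  refine ⟨1 / 2, cesMulConst p, by norm_num, cesMulConst_pos hp, fun z =>
    ⟨?_, iSup_cesNorm_le hpq z⟩⟩
  calc ENNReal.ofReal (1 / 2) * gNorm q z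
      ≤ ENNReal.ofReal (1 / 2) * (2 * ⨆ (x : ℕ → ℝ) (_ : lpSeqNorm p x ≤ 1),
          cesNorm p (fun n => z n * x n)) := by gcongr; exact gNorm_le_two_mul_iSup_cesNorm hpq z
    _ = _ := by
      rw [← mul_assoc, ← ofReal_ofNat 2, ← ofReal_mul (by norm_num)]
      norm_num
end

section
/- Let 1 ≤ p < ∞. There exists a constant C ≥ 1, depending only on p, such that: (a) for all Lebesgue-measurable g, h : (0,∞) → ℝ one has ‖g·h‖_{L_p} ≤ C · ‖g‖_{τL_p} · ‖h‖_{G_p}; and (b) every Lebesgue-measurable f : (0,∞) → ℝ with ‖f‖_{L_p} < ∞ can be written as f = g·h almost everywhere, with g, h Lebesgue-measurable and ‖g‖_{τL_p} · ‖h‖_{G_p} ≤ C · ‖f‖_{L_p}. -/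
open ENNReal MeasureTheory

/-- The `L_p(0,∞)` norm `‖f‖_{L_p} = (∫_0^∞ |f(t)|^p dt)^{1/p}`. -/
noncomputable def LpNorm (p : ℝ) (f : ℝ → ℝ) : ℝ≥0∞ :=
  (∫⁻ t in Set.Ioi (0 : ℝ), ENNReal.ofReal |f t| ^ p) ^ (1 / p)

/-- The Tandori norm `‖f‖_{τL_p} = (∫_0^∞ (esssup_{t≥x} |f(t)|)^p dx)^{1/p}`. -/
noncomputable def TLNorm (p : ℝ) (f : ℝ → ℝ) : ℝ≥0∞ :=
  (∫⁻ x in Set.Ioi (0 : ℝ),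
      (essSup (fun t => ENNReal.ofReal |f t|) (volume.restrict (Set.Ici x))) ^ p) ^ (1 / p)

/-- The norm `‖f‖_{G_q} = sup_{x>0} ((1/x)∫_0^x |f(t)|^q dt)^{1/q}`. -/
noncomputable def GNorm (q : ℝ) (f : ℝ → ℝ) : ℝ≥0∞ :=
  ⨆ (x : ℝ) (_ : 0 < x),
    ((ENNReal.ofReal x)⁻¹ * ∫⁻ t in Set.Ioc (0 : ℝ) x, ENNReal.ofReal |f t| ^ q) ^ (1 / q)

/-!
(a) The essential supremum `E x` of `|g|` over `[x, ∞)` is antitone in `x` and dominates `|g t|`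
for almost every `t > x`, so `|g t| ≤ E (t / 2)` a.e. An antitone `u ≥ 0` is a superposition of
indicators of initial intervals `(0, b]` (layer cake), and on each of them the `G_p` bound gives
`∫_0^b |h|^p ≤ b ‖h‖_{G_p}^p`; hence `∫ u |h|^p ≤ ‖h‖_{G_p}^p ∫ u`. With `u = E (· / 2) ^ p` this
is `‖g h‖_{L_p}^p ≤ 2 ‖g‖_{τL_p}^p ‖h‖_{G_p}^p`.

(b) Let `φ = |f|^p`. Spreading the average of `φ` over each dyadic block `(2^i, 2^(i+1)]` over
all of `(0, 2^(i+1)]` and summing gives an antitone `D` with `∫ D = 2 ‖f‖_{L_p}^p` that dominates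
the block average on each block. Put `V = D + ‖f‖_{L_p}^p e^{-t}` (positive), `g = V^{1/p}` and
`h = f / g`. Then `‖g‖_{τL_p}^p ≤ ∫ V = 3 ‖f‖_{L_p}^p`, and `∫_0^x |h|^p = ∫_0^x φ / V ≤ 2 x`,
since `∫ φ / V` over a block is at most the length of the block and the blocks meeting `(0, x]`
lie in `(0, 2 x]`. So `C = 6` works.
-/

open Set
open scoped Function

theorem volume_Ioi_inter_ofReal_lt (a : ℝ≥0∞) :
    volume (Ioi (0 : ℝ) ∩ {y | ENNReal.ofReal y < a}) = a := by
  rcases eq_or_ne a ⊤ with rfl | ha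
  · simp [Real.volume_Ioi]
  · have : Ioi (0 : ℝ) ∩ {y | ENNReal.ofReal y < a} = Ioo 0 a.toReal := by
      ext y
      simp only [mem_inter_iff, mem_Ioi, mem_ofPred_eq, mem_Ioo]
      exact and_congr_right fun hy => ENNReal.ofReal_lt_iff_lt_toReal hy.le ha
    rw [this, Real.volume_Ioo, sub_zero, ENNReal.ofReal_toReal ha]

section LayerCake

variable {α : Type*} [MeasurableSpace α] {μ : Measure α} [SFinite μ] {u : α → ℝ≥0∞}

theorem lintegral_mul_eq_lintegral_setLIntegral_lt {H : α → ℝ≥0∞} (hu : Measurable u)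
    (hH : Measurable H) :
    ∫⁻ a, u a * H a ∂μ = ∫⁻ y in Ioi (0 : ℝ), ∫⁻ a in {a | ENNReal.ofReal y < u a}, H a ∂μ := by
  have hlt : MeasurableSet {q : α × ℝ | ENNReal.ofReal q.2 < u q.1} :=
    measurableSet_lt (ENNReal.measurable_ofReal.comp measurable_snd) (hu.comp measurable_fst)
  calc ∫⁻ a, u a * H a ∂μ
      = ∫⁻ a, (∫⁻ y in Ioi (0 : ℝ),
          {y : ℝ | ENNReal.ofReal y < u a}.indicator (fun _ => H a) y) ∂μ := by
        refine lintegral_congr fun a => ?_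
        rw [lintegral_indicator_const (measurableSet_lt ENNReal.measurable_ofReal measurable_const),
          Measure.restrict_apply' measurableSet_Ioi, inter_comm, volume_Ioi_inter_ofReal_lt,
          mul_comm]
    _ = ∫⁻ y in Ioi (0 : ℝ), ∫⁻ a, {a | ENNReal.ofReal y < u a}.indicator H a ∂μ :=
        lintegral_lintegral_swap ((hH.comp measurable_fst).indicator hlt).aemeasurable
    _ = _ := by
        refine lintegral_congr fun y => ?_
        rw [lintegral_indicator (measurableSet_lt measurable_const hu)]

theorem lintegral_eq_lintegral_measure_lt (hu : Measurable u) :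
    ∫⁻ a, u a ∂μ = ∫⁻ y in Ioi (0 : ℝ), μ {a | ENNReal.ofReal y < u a} := by
  simpa using lintegral_mul_eq_lintegral_setLIntegral_lt (μ := μ) hu measurable_one

end LayerCake

section InitialInterval

variable {H : ℝ → ℝ≥0∞} {S : ℝ≥0∞}

theorem setLIntegral_le_mul_volume_of_bddAbove
    (hS : ∀ x, 0 < x → ∫⁻ t in Ioc 0 x, H t ≤ ENNReal.ofReal x * S) {A : Set ℝ}
    (hA0 : A ⊆ Ioi 0) (hA : ∀ t ∈ A, Ioc 0 t ⊆ A) (hbdd : BddAbove A) :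
    ∫⁻ t in A, H t ≤ S * volume A := by
  rcases A.eq_empty_or_nonempty with rfl | ⟨t₀, ht₀⟩
  · simp
  have hb : 0 < sSup A := (hA0 ht₀).trans_le (le_csSup hbdd ht₀)
  have hIoo : Ioo 0 (sSup A) ⊆ A := fun t ht => by
    obtain ⟨t', ht', htt'⟩ := exists_lt_of_lt_csSup ⟨t₀, ht₀⟩ ht.2
    exact hA t' ht' ⟨ht.1, htt'.le⟩
  calc ∫⁻ t in A, H t ≤ ∫⁻ t in Ioc 0 (sSup A), H t :=
        lintegral_mono_set fun t ht => ⟨hA0 ht, le_csSup hbdd ht⟩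
    _ ≤ ENNReal.ofReal (sSup A) * S := hS _ hb
    _ = S * volume (Ioo 0 (sSup A)) := by rw [Real.volume_Ioo, sub_zero, mul_comm]
    _ ≤ S * volume A := by gcongr

theorem setLIntegral_le_mul_volume
    (hS : ∀ x, 0 < x → ∫⁻ t in Ioc 0 x, H t ≤ ENNReal.ofReal x * S) {A : Set ℝ}
    (hA0 : A ⊆ Ioi 0) (hA : ∀ t ∈ A, Ioc 0 t ⊆ A) :
    ∫⁻ t in A, H t ≤ S * volume A := by
  have hA_eq : A = ⋃ n : ℕ, A ∩ Iic (n : ℝ) := by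
    rw [← inter_iUnion, eq_comm, inter_eq_left]
    exact fun t _ => mem_iUnion.2 (exists_nat_ge t)
  calc ∫⁻ t in A, H t = ⨆ n : ℕ, ∫⁻ t in A ∩ Iic (n : ℝ), H t := by
        conv_lhs => rw [hA_eq]
        exact setLIntegral_iUnion_of_directed _
          (Monotone.directed_le fun m n hmn =>
            inter_subset_inter_right _ (Iic_subset_Iic.2 (by exact_mod_cast hmn)))
    _ ≤ S * volume A := iSup_le fun n =>
        (setLIntegral_le_mul_volume_of_bddAbove hS (inter_subset_left.trans hA0)
          (fun t ht s hs => ⟨hA t ht.1 hs, hs.2.trans ht.2⟩) bddAbove_Iic.inter_of_right).trans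
          (by gcongr; exact inter_subset_left)

theorem setLIntegral_mul_le_of_antitone {u : ℝ → ℝ≥0∞} (hu : Antitone u) (hH : Measurable H)
    (hS : ∀ x, 0 < x → ∫⁻ t in Ioc 0 x, H t ≤ ENNReal.ofReal x * S) :
    ∫⁻ t in Ioi 0, u t * H t ≤ S * ∫⁻ t in Ioi 0, u t := by
  have hlt : ∀ y : ℝ, MeasurableSet {t | ENNReal.ofReal y < u t} := fun y =>
    measurableSet_lt measurable_const hu.measurable
  rw [lintegral_mul_eq_lintegral_setLIntegral_lt hu.measurable hH,
    lintegral_eq_lintegral_measure_lt hu.measurable, ← lintegral_const_mul]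
  · refine lintegral_mono fun y => ?_
    rw [Measure.restrict_restrict (hlt y), Measure.restrict_apply (hlt y)]
    exact setLIntegral_le_mul_volume hS inter_subset_right
      fun t ht s hs => ⟨(ht.1 : _ < _).trans_le (hu hs.2), hs.1⟩
  · refine Antitone.measurable fun y y' hyy' => measure_mono fun t ht => ?_
    exact (ENNReal.ofReal_le_ofReal hyy').trans_lt ht

end InitialInterval

section EssSup

variable {μ : Measure ℝ} (f : ℝ → ℝ≥0∞)

theorem antitone_essSup_restrict_Ici : Antitone fun x => essSup f (μ.restrict (Ici x)) :=
  fun _ _ hxy => essSup_mono_measure' (Measure.restrict_mono (Ici_subset_Ici.2 hxy) le_rfl)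

theorem ae_le_essSup_restrict_Ici : ∀ᵐ t ∂μ, ∀ x < t, f t ≤ essSup f (μ.restrict (Ici x)) := by
  have h : ∀ q : ℚ, ∀ᵐ t ∂μ, t ∈ Ici (q : ℝ) → f t ≤ essSup f (μ.restrict (Ici q)) := fun q =>
    (ae_restrict_iff' measurableSet_Ici).1 (ENNReal.ae_le_essSup f)
  filter_upwards [ae_all_iff.2 h] with t ht x hxt
  obtain ⟨q, hxq, hqt⟩ := exists_rat_btwn hxt
  exact (ht q hqt.le).trans (antitone_essSup_restrict_Ici f hxq.le)

end EssSup

theorem setLIntegral_Ioi_comp_mul_left {c : ℝ} (hc : 0 < c) (F : ℝ → ℝ≥0∞) :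
    ∫⁻ t in Ioi 0, F (c * t) = ENNReal.ofReal c⁻¹ * ∫⁻ x in Ioi 0, F x := by
  let e := MeasurableEquiv.mulLeft₀ c hc.ne'
  have he : e ⁻¹' Ioi 0 = Ioi 0 := by
    simp [e, preimage_const_mul_Ioi₀ _ hc]
  have hmap : volume.map e = ENNReal.ofReal c⁻¹ • volume := by
    rw [← abs_of_pos (inv_pos.2 hc)]
    exact Real.map_volume_mul_left hc.ne'
  calc ∫⁻ t in Ioi 0, F (c * t) = ∫⁻ t in e ⁻¹' Ioi 0, F (e t) := by rw [he]; rfl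
    _ = ∫⁻ x in Ioi 0, F x ∂(volume.map e) := by rw [e.restrict_map, lintegral_map_equiv]
    _ = _ := by rw [hmap, Measure.restrict_smul, lintegral_smul_measure, smul_eq_mul]

theorem GNorm_le_iff {p : ℝ} (hp : 0 < p) {h : ℝ → ℝ} {K : ℝ≥0∞} :
    GNorm p h ≤ K ↔
      ∀ x, 0 < x → ∫⁻ t in Ioc 0 x, ENNReal.ofReal |h t| ^ p ≤ ENNReal.ofReal x * K ^ p := by
  simp only [GNorm, iSup₂_le_iff]
  refine forall₂_congr fun x hx => ?_
  rw [one_div, ENNReal.rpow_inv_le_iff hp,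
    ENNReal.inv_mul_le_iff (ENNReal.ofReal_pos.2 hx).ne' ENNReal.ofReal_ne_top]

theorem TLNorm_le {p : ℝ} (hp : 0 < p) {g : ℝ → ℝ} {v : ℝ → ℝ≥0∞}
    (hv : ∀ x, 0 < x → ∀ t, x ≤ t → ENNReal.ofReal |g t| ≤ v x) :
    TLNorm p g ≤ (∫⁻ x in Ioi 0, v x ^ p) ^ (1 / p) := by
  refine ENNReal.rpow_le_rpow (setLIntegral_mono' measurableSet_Ioi fun x hx => ?_) (by positivity)
  refine ENNReal.rpow_le_rpow (essSup_le_of_ae_le _ ?_) hp.le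
  filter_upwards [ae_restrict_mem measurableSet_Ici] with t ht using hv x hx t ht

theorem LpNorm_mul_le {p : ℝ} (hp : 0 < p) {g h : ℝ → ℝ} (hh : Measurable h) :
    LpNorm p (fun t => g t * h t) ≤ 2 ^ (1 / p) * (TLNorm p g * GNorm p h) := by
  set E : ℝ → ℝ≥0∞ := fun x => essSup (fun t => ENNReal.ofReal |g t|) (volume.restrict (Ici x))
  have hE : Antitone fun t => E (2⁻¹ * t) ^ p := fun s t hst =>
    ENNReal.rpow_le_rpow (antitone_essSup_restrict_Ici _ (by linarith)) hp.le
  have hpoint : ∀ᵐ t ∂volume.restrict (Ioi 0),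
      ENNReal.ofReal |g t * h t| ^ p ≤ E (2⁻¹ * t) ^ p * ENNReal.ofReal |h t| ^ p := by
    filter_upwards [ae_restrict_mem measurableSet_Ioi,
      ae_restrict_of_ae (ae_le_essSup_restrict_Ici _)] with t ht hg
    rw [abs_mul, ENNReal.ofReal_mul (abs_nonneg _), ENNReal.mul_rpow_of_nonneg _ _ hp.le]
    gcongr
    exact hg _ (by linarith [mem_Ioi.1 ht])
  have hint : ∫⁻ t in Ioi 0, ENNReal.ofReal |g t * h t| ^ p
      ≤ 2 * (∫⁻ x in Ioi 0, E x ^ p) * GNorm p h ^ p :=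
    calc _ ≤ ∫⁻ t in Ioi 0, E (2⁻¹ * t) ^ p * ENNReal.ofReal |h t| ^ p := lintegral_mono_ae hpoint
      _ ≤ GNorm p h ^ p * ∫⁻ t in Ioi 0, E (2⁻¹ * t) ^ p :=
          setLIntegral_mul_le_of_antitone hE (by fun_prop) ((GNorm_le_iff hp).1 le_rfl)
      _ = _ := by
          rw [setLIntegral_Ioi_comp_mul_left (by norm_num) fun x => E x ^ p, mul_comm]
          norm_num
  calc LpNorm p _ ≤ (2 * (∫⁻ x in Ioi 0, E x ^ p) * GNorm p h ^ p) ^ (1 / p) :=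
        ENNReal.rpow_le_rpow hint (by positivity)
    _ = _ := by
        rw [ENNReal.mul_rpow_of_nonneg _ _ (by positivity),
          ENNReal.mul_rpow_of_nonneg _ _ (by positivity), ← ENNReal.rpow_mul,
          mul_one_div_cancel hp.ne', ENNReal.rpow_one, mul_assoc]
        rfl

theorem iUnion_Ioc_zpow {b : ℝ} (hb : 1 < b) : ⋃ i : ℤ, Ioc (b ^ i) (b ^ (i + 1)) = Ioi 0 := by
  ext t
  simp only [mem_iUnion, mem_Ioi]
  exact ⟨fun ⟨i, hi⟩ => (zpow_pos (by linarith) i).trans hi.1,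
    fun ht => exists_mem_Ioc_zpow ht hb⟩

theorem pairwise_disjoint_Ioc_zpow₀ {b : ℝ} (hb : 1 ≤ b) :
    Pairwise (Disjoint on fun i : ℤ => Ioc (b ^ i) (b ^ (i + 1))) := by
  simpa only [Order.succ_eq_add_one] using (zpow_right_mono₀ hb).pairwise_disjoint_on_Ioc_succ

theorem tsum_setLIntegral_Ioc_zpow {b : ℝ} (hb : 1 < b) {μ : Measure ℝ} (φ : ℝ → ℝ≥0∞) :
    ∑' i : ℤ, ∫⁻ t in Ioc (b ^ i) (b ^ (i + 1)), φ t ∂μ = ∫⁻ t in Ioi 0, φ t ∂μ := by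
  rw [← iUnion_Ioc_zpow hb,
    lintegral_iUnion (fun _ => measurableSet_Ioc) (pairwise_disjoint_Ioc_zpow₀ hb.le)]

theorem volume_Ioc_two_zpow (i : ℤ) :
    volume (Ioc ((2 : ℝ) ^ i) (2 ^ (i + 1))) = ENNReal.ofReal (2 ^ i) := by
  rw [Real.volume_Ioc, zpow_add_one₀ two_ne_zero]
  ring_nf

theorem setLIntegral_div_le_measure {α : Type*} [MeasurableSpace α] {μ : Measure α} {s : Set α}
    (hs : MeasurableSet s) (hμ0 : μ s ≠ 0) (hμ : μ s ≠ ⊤) {φ V : α → ℝ≥0∞} (hφ : Measurable φ)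
    (hV : ∀ t ∈ s, (∫⁻ u in s, φ u ∂μ) / μ s ≤ V t) :
    ∫⁻ t in s, φ t / V t ∂μ ≤ μ s :=
  calc ∫⁻ t in s, φ t / V t ∂μ ≤ ∫⁻ t in s, φ t * ((∫⁻ u in s, φ u ∂μ) / μ s)⁻¹ ∂μ :=
        setLIntegral_mono' hs fun t ht => ENNReal.div_le_div_left (hV t ht) _
    _ = (∫⁻ u in s, φ u ∂μ) * (μ s / ∫⁻ u in s, φ u ∂μ) := by
        rw [lintegral_mul_const _ hφ, ENNReal.inv_div (Or.inl hμ) (Or.inl hμ0)]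
    _ ≤ μ s := ENNReal.mul_div_le

section DyadicMajorant

variable (φ : ℝ → ℝ≥0∞)

noncomputable def dyadicMajorant (t : ℝ) : ℝ≥0∞ :=
  ∑' i : ℤ, (Iic ((2 : ℝ) ^ (i + 1))).indicator
    (fun _ => (∫⁻ u in Ioc (2 ^ i) (2 ^ (i + 1)), φ u) / ENNReal.ofReal (2 ^ i)) t

theorem antitone_dyadicMajorant : Antitone (dyadicMajorant φ) := fun s t hst =>
  ENNReal.tsum_le_tsum fun i => by
    by_cases ht : t ∈ Iic ((2 : ℝ) ^ (i + 1))
    · rw [indicator_of_mem ht, indicator_of_mem (mem_Iic.2 (hst.trans ht))]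
    · rw [indicator_of_notMem ht]
      exact zero_le

theorem blockAverage_le_dyadicMajorant {i : ℤ} {t : ℝ} (ht : t ∈ Ioc ((2 : ℝ) ^ i) (2 ^ (i + 1))) :
    (∫⁻ u in Ioc (2 ^ i) (2 ^ (i + 1)), φ u) / ENNReal.ofReal (2 ^ i) ≤ dyadicMajorant φ t := by
  refine le_of_eq_of_le ?_ (ENNReal.le_tsum i)
  rw [indicator_of_mem (mem_Iic.2 ht.2)]

theorem dyadicMajorant_le (t : ℝ) :
    dyadicMajorant φ t ≤ (∫⁻ u in Ioi 0, φ u) / ENNReal.ofReal (t / 2) := by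
  rw [← tsum_setLIntegral_Ioc_zpow one_lt_two, div_eq_mul_inv, ← ENNReal.tsum_mul_right]
  refine ENNReal.tsum_le_tsum fun i => ?_
  rw [← div_eq_mul_inv, indicator_apply]
  split_ifs with hti
  · refine ENNReal.div_le_div_left (ENNReal.ofReal_le_ofReal ?_) _
    rw [zpow_add_one₀ two_ne_zero] at hti
    linarith [mem_Iic.1 hti]
  · exact zero_le

theorem setLIntegral_dyadicMajorant :
    ∫⁻ t in Ioi 0, dyadicMajorant φ t = 2 * ∫⁻ t in Ioi 0, φ t := by
  simp only [dyadicMajorant]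
  rw [lintegral_tsum fun i =>
    (measurable_const.indicator measurableSet_Iic).aemeasurable,
    ← tsum_setLIntegral_Ioc_zpow one_lt_two, ← ENNReal.tsum_mul_left]
  refine tsum_congr fun i => ?_
  rw [lintegral_indicator_const measurableSet_Iic, Measure.restrict_apply measurableSet_Iic,
    Iic_inter_Ioi, Real.volume_Ioc, sub_zero, zpow_add_one₀ two_ne_zero,
    ENNReal.ofReal_mul (zpow_pos two_pos i).le, ENNReal.ofReal_ofNat, ← mul_assoc,
    ENNReal.div_mul_cancel (ENNReal.ofReal_pos.2 (zpow_pos two_pos i)).ne' ENNReal.ofReal_ne_top,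
    mul_comm]

end DyadicMajorant

theorem setLIntegral_Ioc_div_le_of_blockAverage_le {φ V : ℝ → ℝ≥0∞} (hφ : Measurable φ)
    (hV : ∀ (i : ℤ), ∀ t ∈ Ioc ((2 : ℝ) ^ i) (2 ^ (i + 1)),
      (∫⁻ u in Ioc (2 ^ i) (2 ^ (i + 1)), φ u) / ENNReal.ofReal (2 ^ i) ≤ V t) (x : ℝ) :
    ∫⁻ t in Ioc 0 x, φ t / V t ≤ ENNReal.ofReal (2 * x) := by
  set B : ℤ → Set ℝ := fun i => Ioc ((2 : ℝ) ^ i) (2 ^ (i + 1))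
  have hB : ∀ {s : Set ℝ}, s ⊆ Ioi 0 → s = ⋃ i, s ∩ B i := fun hs => by
    rw [← inter_iUnion, iUnion_Ioc_zpow one_lt_two, inter_eq_left.2 hs]
  have hBdisj : ∀ s : Set ℝ, Pairwise (Disjoint on fun i => s ∩ B i) := fun s i j hij =>
    (pairwise_disjoint_Ioc_zpow₀ one_le_two hij).mono inter_subset_right inter_subset_right
  have hblock : ∀ i, ∫⁻ t in Ioc 0 x ∩ B i, φ t / V t ≤ volume (Ioc 0 (2 * x) ∩ B i) := by
    intro i
    by_cases hi : (2 : ℝ) ^ i < x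
    · have hsub : B i ⊆ Ioc 0 (2 * x) := Ioc_subset_Ioc (zpow_pos two_pos i).le (by
        rw [zpow_add_one₀ two_ne_zero]; linarith)
      rw [inter_eq_right.2 hsub]
      refine (lintegral_mono_set inter_subset_right).trans
        (setLIntegral_div_le_measure measurableSet_Ioc (by simp) (by simp) hφ ?_)
      simpa only [B, volume_Ioc_two_zpow] using hV i
    · have : Ioc 0 x ∩ B i = ∅ := by
        refine eq_empty_of_forall_notMem fun t ht => hi ?_
        exact ht.2.1.trans_le ht.1.2
      simp [this]
  calc ∫⁻ t in Ioc 0 x, φ t / V t = ∑' i, ∫⁻ t in Ioc 0 x ∩ B i, φ t / V t := by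
        conv_lhs => rw [hB Ioc_subset_Ioi_self]
        exact lintegral_iUnion (fun i => measurableSet_Ioc.inter measurableSet_Ioc) (hBdisj _) _
    _ ≤ ∑' i, volume (Ioc 0 (2 * x) ∩ B i) := ENNReal.tsum_le_tsum hblock
    _ = ENNReal.ofReal (2 * x) := by
        rw [← measure_iUnion (hBdisj _) fun i => measurableSet_Ioc.inter measurableSet_Ioc,
          ← hB Ioc_subset_Ioi_self, Real.volume_Ioc, sub_zero]

theorem ofReal_abs_toReal_rpow_le (a : ℝ≥0∞) {r : ℝ} (hr : 0 ≤ r) :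
    ENNReal.ofReal |a.toReal ^ r| ≤ a ^ r := by
  rw [abs_of_nonneg (by positivity), ← ENNReal.ofReal_rpow_of_nonneg ENNReal.toReal_nonneg hr]
  exact ENNReal.rpow_le_rpow ENNReal.ofReal_toReal_le hr

theorem ofReal_abs_div_toReal_rpow_rpow {p : ℝ} (hp : 0 < p) (y : ℝ) {a : ℝ≥0∞} (ha0 : a ≠ 0)
    (ha : a ≠ ⊤) : ENNReal.ofReal |y / a.toReal ^ (1 / p)| ^ p = ENNReal.ofReal |y| ^ p / a := by
  have hpos : 0 < a.toReal ^ (1 / p) := Real.rpow_pos_of_pos (ENNReal.toReal_pos ha0 ha) _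
  rw [abs_div, abs_of_pos hpos, ENNReal.ofReal_div_of_pos hpos,
    ENNReal.div_rpow_of_nonneg _ _ hp.le, ← ENNReal.ofReal_rpow_of_nonneg ENNReal.toReal_nonneg
      (by positivity), ← ENNReal.rpow_mul, one_div_mul_cancel hp.ne', ENNReal.rpow_one,
    ENNReal.ofReal_toReal ha]

theorem exists_factorization_of_majorant {p : ℝ} (hp : 0 < p) {f : ℝ → ℝ} (hf : Measurable f)
    {V : ℝ → ℝ≥0∞} (hV : Antitone V) (hV0 : ∀ t, 0 < t → V t ≠ 0) (hVtop : ∀ t, 0 < t → V t ≠ ⊤)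
    (hblock : ∀ (i : ℤ), ∀ t ∈ Ioc ((2 : ℝ) ^ i) (2 ^ (i + 1)),
      (∫⁻ u in Ioc (2 ^ i) (2 ^ (i + 1)), ENNReal.ofReal |f u| ^ p) / ENNReal.ofReal (2 ^ i)
        ≤ V t) :
    ∃ g h : ℝ → ℝ, Measurable g ∧ Measurable h ∧
      (∀ᵐ t ∂(volume.restrict (Ioi 0)), f t = g t * h t) ∧
      TLNorm p g * GNorm p h ≤ (2 * ∫⁻ t in Ioi 0, V t) ^ (1 / p) := by
  set g : ℝ → ℝ := fun t => (V t).toReal ^ (1 / p)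
  have hg : Measurable g := (ENNReal.measurable_toReal.comp hV.measurable).pow_const _
  refine ⟨g, fun t => f t / g t, hg, hf.div hg, ?_, ?_⟩
  · filter_upwards [ae_restrict_mem measurableSet_Ioi] with t ht
    rw [mul_div_cancel₀]
    exact (Real.rpow_pos_of_pos (ENNReal.toReal_pos (hV0 t ht) (hVtop t ht)) _).ne'
  have hTL : TLNorm p g ≤ (∫⁻ t in Ioi 0, V t) ^ (1 / p) := by
    refine (TLNorm_le hp fun x _ t hxt => (ofReal_abs_toReal_rpow_le _ (by positivity)).trans
      (ENNReal.rpow_le_rpow (hV hxt) (by positivity))).trans_eq ?_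
    simp_rw [← ENNReal.rpow_mul, one_div_mul_cancel hp.ne', ENNReal.rpow_one]
  have hG : GNorm p (fun t => f t / g t) ≤ 2 ^ (1 / p) := by
    refine (GNorm_le_iff hp).2 fun x _ => ?_
    rw [← ENNReal.rpow_mul, one_div_mul_cancel hp.ne', ENNReal.rpow_one, ← ENNReal.ofReal_ofNat,
      ← ENNReal.ofReal_mul' zero_le_two, mul_comm]
    refine le_of_eq_of_le (setLIntegral_congr_fun measurableSet_Ioc fun t ht => ?_)
      (setLIntegral_Ioc_div_le_of_blockAverage_le (by fun_prop) hblock x)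
    exact ofReal_abs_div_toReal_rpow_rpow hp _ (hV0 t ht.1) (hVtop t ht.1)
  calc TLNorm p g * GNorm p (fun t => f t / g t)
      ≤ (∫⁻ t in Ioi 0, V t) ^ (1 / p) * 2 ^ (1 / p) := mul_le_mul' hTL hG
    _ = (2 * ∫⁻ t in Ioi 0, V t) ^ (1 / p) := by
        rw [ENNReal.mul_rpow_of_nonneg _ _ (by positivity), mul_comm]

theorem setLIntegral_Ioi_ofReal_exp_neg : ∫⁻ t in Ioi 0, ENNReal.ofReal (Real.exp (-t)) = 1 := by
  rw [← ofReal_integral_eq_lintegral_ofReal (integrableOn_exp_neg_Ioi 0)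
    (Filter.Eventually.of_forall fun t => (Real.exp_pos _).le), integral_exp_neg_Ioi_zero,
    ENNReal.ofReal_one]

theorem exists_factorization {p : ℝ} (hp : 0 < p) {f : ℝ → ℝ} (hf : Measurable f)
    (hfin : LpNorm p f < ⊤) :
    ∃ g h : ℝ → ℝ, Measurable g ∧ Measurable h ∧
      (∀ᵐ t ∂(volume.restrict (Ioi 0)), f t = g t * h t) ∧
      TLNorm p g * GNorm p h ≤ 6 ^ (1 / p) * LpNorm p f := by
  set φ : ℝ → ℝ≥0∞ := fun t => ENNReal.ofReal |f t| ^ p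
  set I := ∫⁻ t in Ioi 0, φ t
  have hLp : LpNorm p f = I ^ (1 / p) := rfl
  have hI : I ≠ ⊤ := fun hI => by
    rw [hLp, hI, ENNReal.top_rpow_of_pos (by positivity)] at hfin
    exact lt_irrefl _ hfin
  rcases eq_or_ne I 0 with hI0 | hI0
  · refine ⟨0, 0, measurable_const, measurable_const, ?_, ?_⟩
    · filter_upwards [(lintegral_eq_zero_iff (by fun_prop)).1 hI0] with t ht
      simpa [φ, hp.ne', hp] using ht
    · simp [GNorm, hp]
  set V : ℝ → ℝ≥0∞ := fun t => dyadicMajorant φ t + I * ENNReal.ofReal (Real.exp (-t))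
  have hV : Antitone V := (antitone_dyadicMajorant φ).add fun s t hst => by gcongr
  have hV0 : ∀ t, 0 < t → V t ≠ 0 := fun t _ =>
    (ENNReal.mul_pos hI0 (ENNReal.ofReal_pos.2 (Real.exp_pos _)).ne').trans_le le_add_self |>.ne'
  have hVtop : ∀ t, 0 < t → V t ≠ ⊤ := fun t ht => ENNReal.add_ne_top.2
    ⟨((dyadicMajorant_le φ t).trans_lt
      (ENNReal.div_lt_top hI (ENNReal.ofReal_pos.2 (half_pos ht)).ne')).ne,
      ENNReal.mul_ne_top hI ENNReal.ofReal_ne_top⟩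
  obtain ⟨g, h, hg, hh, hfgh, hgh⟩ := exists_factorization_of_majorant hp hf hV hV0 hVtop
    fun i t ht => (blockAverage_le_dyadicMajorant φ ht).trans le_self_add
  refine ⟨g, h, hg, hh, hfgh, hgh.trans_eq ?_⟩
  have hVint : ∫⁻ t in Ioi 0, V t = 3 * I := by
    rw [lintegral_add_left (antitone_dyadicMajorant φ).measurable, setLIntegral_dyadicMajorant,
      lintegral_const_mul _ (by fun_prop), setLIntegral_Ioi_ofReal_exp_neg]
    ring
  rw [hLp, hVint, ← mul_assoc, ENNReal.mul_rpow_of_nonneg _ _ (by positivity)]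
  norm_num

/-- The factorization `L_p = τL_p ⊙ G_p` (Bennett; Astashkin–Maligranda). -/
theorem stmt_13 (p : ℝ) (hp : 1 ≤ p) :
    ∃ C : ℝ, 1 ≤ C ∧
      (∀ g h : ℝ → ℝ, Measurable g → Measurable h →
        LpNorm p (fun t => g t * h t) ≤ ENNReal.ofReal C * (TLNorm p g * GNorm p h)) ∧
      (∀ f : ℝ → ℝ, Measurable f → LpNorm p f < ⊤ →
        ∃ g h : ℝ → ℝ, Measurable g ∧ Measurable h ∧
          (∀ᵐ t ∂(volume.restrict (Set.Ioi (0 : ℝ))), f t = g t * h t) ∧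
          TLNorm p g * GNorm p h ≤ ENNReal.ofReal C * LpNorm p f) := by
  have hp0 : 0 < p := one_pos.trans_le hp
  have hroot : ∀ a : ℝ≥0∞, 1 ≤ a → a ^ (1 / p) ≤ a := fun a ha => by
    simpa using ENNReal.rpow_le_rpow_of_exponent_le ha ((div_le_one hp0).2 hp)
  have h6 : (6 : ℝ≥0∞) = ENNReal.ofReal 6 := ENNReal.ofReal_ofNat 6 |>.symm
  refine ⟨6, by norm_num, fun g h _ hh => ?_, fun f hf hfin => ?_⟩
  · refine (LpNorm_mul_le hp0 hh).trans ?_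
    gcongr
    exact h6 ▸ (hroot 2 one_le_two).trans (by norm_num)
  · obtain ⟨g, h, hg, hh, hfgh, hgh⟩ := exists_factorization hp0 hf hfin
    refine ⟨g, h, hg, hh, hfgh, hgh.trans ?_⟩
    gcongr
    exact h6 ▸ hroot 6 (by norm_num)
end
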